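/- arXiv:1012.3235 — 7 statements merged into one kernel-verified Lean document; each statement's English description precedes it below -/
import Mathlib

section
/- The quotient space of the d-fold Cartesian product (S²)^d by the action of the symmetric group S_d permuting coordinates is homeomorphic to the d-dimensional complex projective space ℂP^d. -/
/-- The unit 2-sphere, as a subset of Euclidean 3-space. -/
def S2 : Set (EuclideanSpace ℝ (Fin 3)) := Metric.sphere 0 1

/-- The relation on `(S²)^d` identifying tuples that differ by a coordinate permutation. -/
def permRel (d : ℕ) (x y : Fin d → S2) : Prop :=
  ∃ π : Equiv.Perm (Fin d), x ∘ π = y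

/-- Complex projective `n`-space, as the quotient of the nonzero vectors of `ℂ^{n+1}` by the
scalar action of `ℂˣ`. -/
abbrev CP (n : ℕ) : Type :=
  Quot (fun v w : {v : Fin (n + 1) → ℂ // v ≠ 0} => ∃ c : ℂˣ, (c : ℂ) • v.val = w.val)

/-!
Stereographic projection identifies a point of `S²` with a point `[a : b]` of `ℂP¹`, and a `d`-tuple
of such points gives the binary form `∏ (bᵢ X - aᵢ)`, whose `d + 1` coefficients, defined up to a
common scalar, are a point of `ℂP^d` that only depends on the unordered tuple. The form gives the
tuple back up to order, as its roots together with `∞` counted `d - deg` times, and since `ℂ` is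
algebraically closed every nonzero polynomial of degree at most `d` arises. Near any tuple the
homogeneous coordinates can be chosen continuously, so the induced map is a continuous bijection
from a compact space onto a Hausdorff one.
-/

open Polynomial Filter Topology

theorem Equiv.Perm.exists_comp_eq_of_map_univ_eq {ι α : Type*} [Fintype ι] {x y : ι → α}
    (h : Finset.univ.val.map x = Finset.univ.val.map y) : ∃ σ : Equiv.Perm ι, x ∘ σ = y := by
  classical
  have hfiber (a : α) : Fintype.card {i // y i = a} = Fintype.card {i // x i = a} := by
    have := congrArg (Multiset.count a) h
    simp only [Multiset.count_map] at this
    simp only [Fintype.card_subtype, Finset.card, Finset.filter_val, eq_comm (a := a)] at this ⊢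
    exact this.symm
  exact ⟨Equiv.ofFiberEquiv fun a => Fintype.equivOfCardEq (hfiber a),
    funext (Equiv.ofFiberEquiv_map _)⟩

section ProjectiveSpace

variable (K V : Type*) [Field K] [AddCommGroup V] [Module K V]

def ProjRel (v w : {v : V // v ≠ 0}) : Prop := ∃ c : Kˣ, (c : K) • v.val = w.val

variable {K V}

theorem projRel_equivalence : Equivalence (ProjRel K V) where
  refl _ := ⟨1, one_smul _ _⟩
  symm := by
    rintro v w ⟨c, hc⟩
    exact ⟨c⁻¹, by rw [← hc, smul_smul, Units.inv_mul, one_smul]⟩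
  trans := by
    rintro u v w ⟨c, hc⟩ ⟨c', hc'⟩
    exact ⟨c' * c, by rw [← hc', ← hc, smul_smul, Units.val_mul]⟩

theorem quot_mk_projRel_eq_iff {v w : {v : V // v ≠ 0}} :
    Quot.mk (ProjRel K V) v = Quot.mk _ w ↔ ProjRel K V v w := by
  rw [Quot.eq, projRel_equivalence.eqvGen_iff]

theorem isOpenQuotientMap_quot_mk_projRel [TopologicalSpace V] [ContinuousConstSMul K V] :
    IsOpenQuotientMap (Quot.mk (ProjRel K V)) := by
  refine ⟨Quot.mk_surjective, continuous_quot_mk, fun U hU => ?_⟩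
  let scale (c : Kˣ) (v : {v : V // v ≠ 0}) : {v : V // v ≠ 0} :=
    ⟨(c : K) • v.val, smul_ne_zero c.ne_zero v.2⟩
  have hsat : Quot.mk (ProjRel K V) ⁻¹' (Quot.mk _ '' U) = ⋃ c : Kˣ, scale c ⁻¹' U := by
    ext w
    simp only [Set.mem_preimage, Set.mem_image, quot_mk_projRel_eq_iff, Set.mem_iUnion]
    constructor
    · rintro ⟨u, hu, c, hc⟩
      refine ⟨c⁻¹, ?_⟩
      convert hu using 1
      exact Subtype.ext (by simp [scale, ← hc, smul_smul])
    · rintro ⟨c, hc⟩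
      exact ⟨_, hc, c⁻¹, by simp [scale, smul_smul]⟩
  rw [isOpen_coinduced, hsat]
  exact isOpen_iUnion fun c =>
    hU.preimage ((continuous_subtype_val.const_smul (c : K)).subtype_mk _)

variable {ι : Type*}

theorem projRel_iff_forall_mul_eq_mul {v w : {v : ι → K // v ≠ 0}} :
    ProjRel K (ι → K) v w ↔ ∀ i j, v.1 i * w.1 j = v.1 j * w.1 i := by
  constructor
  · rintro ⟨c, hc⟩ i j
    simp only [← hc, Pi.smul_apply, smul_eq_mul]
    ring
  · intro h
    obtain ⟨j, hj⟩ := Function.ne_iff.1 v.2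
    have hvj : v.1 j ≠ 0 := hj
    have hw : ∀ i, w.1 i = (w.1 j / v.1 j) * v.1 i := fun i => by
      field_simp
      linear_combination -h i j
    have hc : w.1 j / v.1 j ≠ 0 := fun hc => w.2 (funext fun i => by simp [hw i, hc])
    exact ⟨Units.mk0 _ hc, funext fun i => (hw i).symm⟩

theorem t2Space_quot_projRel [TopologicalSpace K] [ContinuousMul K] [T2Space K] :
    T2Space (Quot (ProjRel K (ι → K))) := by
  rw [t2Space_iff_of_isOpenQuotientMap isOpenQuotientMap_quot_mk_projRel]
  simp only [quot_mk_projRel_eq_iff, projRel_iff_forall_mul_eq_mul, Set.ofPred_forall]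
  have h₁ (k : ι) : Continuous fun q : {v : ι → K // v ≠ 0} × {v : ι → K // v ≠ 0} => q.1.1 k :=
    (continuous_apply k).comp (continuous_subtype_val.comp continuous_fst)
  have h₂ (k : ι) : Continuous fun q : {v : ι → K // v ≠ 0} × {v : ι → K // v ≠ 0} => q.2.1 k :=
    (continuous_apply k).comp (continuous_subtype_val.comp continuous_snd)
  exact isClosed_iInter fun i => isClosed_iInter fun j =>
    isClosed_eq ((h₁ i).mul (h₂ j)) ((h₁ j).mul (h₂ i))

theorem continuousAt_of_eventually_eq_quot_mk {X : Type*} [TopologicalSpace V]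
    [TopologicalSpace X] {F : X → Quot (ProjRel K V)} {f : X → V} (hf : Continuous f) {x₀ : X}
    (h : ∀ᶠ x in 𝓝 x₀, ∃ hx : f x ≠ 0, F x = Quot.mk _ ⟨f x, hx⟩) : ContinuousAt F x₀ := by
  set U := {x | ∃ hx : f x ≠ 0, F x = Quot.mk _ ⟨f x, hx⟩}
  refine ContinuousOn.continuousAt (s := U) ?_ h
  rw [continuousOn_iff_continuous_domRestrict]
  have : U.domRestrict F = fun x : U => Quot.mk (ProjRel K V) ⟨f x, x.2.1⟩ :=
    funext fun x => x.2.2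
  rw [this]
  exact continuous_quot_mk.comp ((hf.comp continuous_subtype_val).subtype_mk _)

end ProjectiveSpace

section PolynomialCoordinates

variable {K : Type*} [Field K] {n : ℕ}

theorem mem_degreeLT_succ_iff {P : K[X]} : P ∈ degreeLT K (n + 1) ↔ P.natDegree ≤ n := by
  rw [degreeLT_succ_eq_degreeLE, mem_degreeLE, natDegree_le_iff_degree_le]

noncomputable def ofPoly (P : K[X]) (hd : P.natDegree ≤ n) (h0 : P ≠ 0) :
    Quot (ProjRel K (Fin (n + 1) → K)) :=
  Quot.mk _ ⟨degreeLTEquiv K (n + 1) ⟨P, mem_degreeLT_succ_iff.2 hd⟩,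
    (degreeLTEquiv_eq_zero_iff_eq_zero _).not.2 h0⟩

theorem ofPoly_eq_ofPoly_iff {P Q : K[X]} {hP : P.natDegree ≤ n} {hQ : Q.natDegree ≤ n}
    {hP0 : P ≠ 0} {hQ0 : Q ≠ 0} :
    ofPoly P hP hP0 = ofPoly Q hQ hQ0 ↔ ∃ c : Kˣ, C (c : K) * P = Q := by
  rw [ofPoly, ofPoly, quot_mk_projRel_eq_iff]
  refine exists_congr fun c => ?_
  rw [← map_smul, (degreeLTEquiv K (n + 1)).injective.eq_iff, Subtype.ext_iff, Submodule.coe_smul,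
    smul_eq_C_mul]

theorem exists_ofPoly_eq (x : Quot (ProjRel K (Fin (n + 1) → K))) :
    ∃ (P : K[X]) (hd : P.natDegree ≤ n) (h0 : P ≠ 0), ofPoly P hd h0 = x := by
  obtain ⟨⟨v, hv⟩, rfl⟩ := Quot.mk_surjective x
  set P := (degreeLTEquiv K (n + 1)).symm v
  have hPv : degreeLTEquiv K (n + 1) P = v := LinearEquiv.apply_symm_apply _ v
  refine ⟨P.1, mem_degreeLT_succ_iff.1 P.2, fun h => hv ?_, congrArg _ (Subtype.ext hPv)⟩
  rw [← hPv, Submodule.coe_eq_zero.1 h, map_zero]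

end PolynomialCoordinates

section LinearFactors

variable {K : Type*} [Field K]

noncomputable def linFactor (v : K × K) : K[X] := C v.2 * X - C v.1

noncomputable def prodLinFactor {d : ℕ} (w : Fin d → K × K) : K[X] := ∏ i, linFactor (w i)

open Classical in
/-- The zero of `linFactor v` on the projective line, `none` standing for `∞`. -/
noncomputable def projRoot (v : K × K) : Option K := if v.2 = 0 then none else some (v.1 / v.2)

theorem linFactor_of_snd_eq_zero {v : K × K} (h : v.2 = 0) : linFactor v = C (-v.1) := by
  rw [linFactor, h, C_0, zero_mul, zero_sub, C_neg]

theorem linFactor_of_snd_ne_zero {v : K × K} (h : v.2 ≠ 0) :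
    linFactor v = C v.2 * (X - C (v.1 / v.2)) := by
  rw [linFactor, mul_sub, ← C_mul, mul_div_cancel₀ _ h]

theorem linFactor_ne_zero {v : K × K} (hv : v ≠ 0) : linFactor v ≠ 0 := by
  by_cases h : v.2 = 0
  · rw [linFactor_of_snd_eq_zero h, Ne, C_eq_zero, neg_eq_zero]
    exact fun h1 => hv (Prod.ext h1 h)
  · rw [linFactor_of_snd_ne_zero h]
    exact mul_ne_zero (C_ne_zero.2 h) (X_sub_C_ne_zero _)

theorem natDegree_linFactor_le (v : K × K) : (linFactor v).natDegree ≤ 1 :=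
  natDegree_sub_le_of_le ((natDegree_C_mul_le _ _).trans natDegree_X_le) (natDegree_C _).le

theorem linFactor_smul (c : K) (v : K × K) : linFactor (c • v) = C c * linFactor v := by
  simp only [linFactor, Prod.smul_fst, Prod.smul_snd, smul_eq_mul, C_mul]
  ring

theorem singleton_projRoot (v : K × K) :
    {projRoot v} = (linFactor v).roots.map some +
      Multiset.replicate (1 - (linFactor v).natDegree) none := by
  by_cases h : v.2 = 0
  · simp [projRoot, h, linFactor_of_snd_eq_zero]
  · simp [projRoot, h, linFactor_of_snd_ne_zero, roots_C_mul, natDegree_C_mul]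

theorem prodLinFactor_ne_zero {d : ℕ} {w : Fin d → K × K} (hw : ∀ i, w i ≠ 0) :
    prodLinFactor w ≠ 0 :=
  Finset.prod_ne_zero_iff.2 fun i _ => linFactor_ne_zero (hw i)

theorem natDegree_prodLinFactor_le {d : ℕ} (w : Fin d → K × K) :
    (prodLinFactor w).natDegree ≤ d :=
  (natDegree_prod_le _ _).trans <| (Finset.sum_le_sum fun i _ => natDegree_linFactor_le (w i)).trans
    (by simp)

theorem prodLinFactor_smul {d : ℕ} (c : Fin d → K) (w : Fin d → K × K) :
    prodLinFactor (fun i => c i • w i) = C (∏ i, c i) * prodLinFactor w := by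
  simp only [prodLinFactor, linFactor_smul, Finset.prod_mul_distrib, map_prod]

theorem prodLinFactor_comp_perm {d : ℕ} (w : Fin d → K × K) (π : Equiv.Perm (Fin d)) :
    prodLinFactor (w ∘ π) = prodLinFactor w :=
  Equiv.prod_comp π fun i => linFactor (w i)

theorem prodLinFactor_cons {d : ℕ} (v : K × K) (w : Fin d → K × K) :
    prodLinFactor (Fin.cons v w : Fin (d + 1) → K × K) = linFactor v * prodLinFactor w := by
  simp only [prodLinFactor, Fin.prod_univ_succ, Fin.cons_zero, Fin.cons_succ]

theorem map_projRoot_eq {d : ℕ} {w : Fin d → K × K} (hw : ∀ i, w i ≠ 0) :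
    Finset.univ.val.map (projRoot ∘ w) = (prodLinFactor w).roots.map some +
      Multiset.replicate (d - (prodLinFactor w).natDegree) none := by
  induction d with
  | zero => simp [prodLinFactor]
  | succ d ih =>
    have h₀ := linFactor_ne_zero (hw 0)
    have h₁ := prodLinFactor_ne_zero (w := Fin.tail w) fun i => hw i.succ
    rw [← Fin.cons_self_tail w, prodLinFactor_cons, roots_mul (mul_ne_zero h₀ h₁),
      natDegree_mul h₀ h₁]
    have hdeg : d + 1 - ((linFactor (w 0)).natDegree + (prodLinFactor (Fin.tail w)).natDegree) =
        (1 - (linFactor (w 0)).natDegree) + (d - (prodLinFactor (Fin.tail w)).natDegree) := by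
      have := natDegree_linFactor_le (w 0)
      have := natDegree_prodLinFactor_le (Fin.tail w)
      omega
    rw [Fin.univ_val_map, List.ofFn_succ, ← Multiset.cons_coe, ← Fin.univ_val_map,
      ← Multiset.singleton_add]
    simp only [Function.comp_apply, Fin.cons_zero, Fin.cons_succ]
    rw [← Function.comp_def projRoot (Fin.tail w), singleton_projRoot,
      ih (w := Fin.tail w) fun i => hw i.succ, hdeg, Multiset.map_add, Multiset.replicate_add]
    abel

theorem map_projRoot_eq_of_prodLinFactor_eq {d : ℕ} {w w' : Fin d → K × K} (hw : ∀ i, w i ≠ 0)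
    (hw' : ∀ i, w' i ≠ 0) {c : K} (hc : c ≠ 0) (h : prodLinFactor w' = C c * prodLinFactor w) :
    Finset.univ.val.map (projRoot ∘ w') = Finset.univ.val.map (projRoot ∘ w) := by
  rw [map_projRoot_eq hw, map_projRoot_eq hw', h, roots_C_mul _ hc, natDegree_C_mul hc]

theorem prodLinFactor_mem_degreeLT {d : ℕ} (w : Fin d → K × K) :
    prodLinFactor w ∈ degreeLT K (d + 1) :=
  mem_degreeLT_succ_iff.2 (natDegree_prodLinFactor_le w)

theorem exists_eq_linFactor_mul [IsAlgClosed K] {d : ℕ} {Q : K[X]} (hQ : Q.natDegree ≤ d + 1) :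
    ∃ v : K × K, v ≠ 0 ∧ ∃ Q' : K[X], Q'.natDegree ≤ d ∧ Q = linFactor v * Q' := by
  by_cases hd : Q.natDegree ≤ d
  · refine ⟨(-1, 0), by simp, Q, hd, ?_⟩
    rw [linFactor_of_snd_eq_zero rfl, neg_neg, C_1, one_mul]
  · obtain ⟨z, hz⟩ := IsAlgClosed.exists_root Q (degree_ne_of_natDegree_ne (n := 0) (by omega))
    refine ⟨(z, 1), by simp, Q /ₘ (X - C z), ?_, ?_⟩
    · rw [natDegree_divByMonic _ (monic_X_sub_C z), natDegree_X_sub_C]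
      omega
    · rw [linFactor, C_1, one_mul, mul_divByMonic_eq_iff_isRoot.2 hz]

theorem exists_eq_C_mul_prodLinFactor [IsAlgClosed K] {d : ℕ} {Q : K[X]} (hQ : Q ≠ 0)
    (hd : Q.natDegree ≤ d) :
    ∃ w : Fin d → K × K, (∀ i, w i ≠ 0) ∧ ∃ c : K, c ≠ 0 ∧ Q = C c * prodLinFactor w := by
  induction d generalizing Q with
  | zero =>
    refine ⟨Fin.elim0, Fin.rec0, Q.coeff 0, ?_, ?_⟩
    · rw [← Nat.le_zero.1 hd]
      exact leadingCoeff_ne_zero.2 hQ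
    · rw [prodLinFactor, Finset.univ_eq_empty, Finset.prod_empty, mul_one]
      exact eq_C_of_natDegree_le_zero hd
  | succ d ih =>
    obtain ⟨v, hv, Q', hQ'd, rfl⟩ := exists_eq_linFactor_mul hd
    obtain ⟨w, hw, c, hc, rfl⟩ := ih (right_ne_zero_of_mul hQ) hQ'd
    refine ⟨Fin.cons v w, Fin.cons hv hw, c, hc, ?_⟩
    rw [prodLinFactor_cons]
    ring

end LinearFactors

theorem continuous_coeff_prod {X R ι : Type*} [TopologicalSpace X] [CommSemiring R]
    [TopologicalSpace R] [ContinuousAdd R] [ContinuousMul R] (s : Finset ι) {f : ι → X → R[X]}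
    (hf : ∀ i k, Continuous fun x => (f i x).coeff k) (k : ℕ) :
    Continuous fun x => (∏ i ∈ s, f i x).coeff k := by
  induction s using Finset.cons_induction generalizing k with
  | empty => simpa using continuous_const
  | cons i s hi ih =>
    simp only [Finset.prod_cons, coeff_mul]
    exact continuous_finsetSum _ fun q _ => (hf i q.1).mul (ih q.2)

theorem continuous_coeff_prodLinFactor {X K : Type*} [TopologicalSpace X] [Field K]
    [TopologicalSpace K] [IsTopologicalRing K] {d : ℕ} {g : X → Fin d → K × K}
    (hg : Continuous g) (k : ℕ) : Continuous fun x => (prodLinFactor (g x)).coeff k := by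
  refine continuous_coeff_prod _ (fun i k => ?_) k
  have hgi : Continuous fun x => g x i := (continuous_apply i).comp hg
  simp only [linFactor, coeff_sub, coeff_C_mul_X, coeff_C]
  split_ifs <;> fun_prop

namespace S2

theorem mem_iff (v : EuclideanSpace ℝ (Fin 3)) : v ∈ S2 ↔ v 0 ^ 2 + v 1 ^ 2 + v 2 ^ 2 = 1 := by
  rw [S2, mem_sphere_zero_iff_norm, EuclideanSpace.norm_eq, Real.sqrt_eq_one, Fin.sum_univ_three]
  simp only [Real.norm_eq_abs, sq_abs]

theorem sq_add_sq_add_sq (x : S2) : x.1 0 ^ 2 + x.1 1 ^ 2 + x.1 2 ^ 2 = 1 := (mem_iff _).1 x.2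

def height (x : S2) : ℝ := x.1 2

def horizontal (x : S2) : ℂ := ⟨x.1 0, x.1 1⟩

theorem ext_horizontal_height {x y : S2} (h₁ : horizontal x = horizontal y)
    (h₂ : height x = height y) : x = y := by
  refine Subtype.ext (PiLp.ext fun i => ?_)
  fin_cases i
  exacts [congrArg Complex.re h₁, congrArg Complex.im h₁, h₂]

theorem normSq_horizontal (x : S2) : Complex.normSq (horizontal x) = 1 - height x ^ 2 := by
  rw [horizontal, Complex.normSq_mk, height, ← sq_add_sq_add_sq x]
  ring

@[fun_prop]
theorem continuous_height : Continuous height :=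
  (EuclideanSpace.proj (𝕜 := ℝ) (2 : Fin 3)).continuous.comp continuous_subtype_val

@[fun_prop]
theorem continuous_horizontal : Continuous horizontal := by
  have h (i : Fin 3) : Continuous fun x : S2 => x.1 i :=
    (EuclideanSpace.proj (𝕜 := ℝ) i).continuous.comp continuous_subtype_val
  exact Complex.equivRealProdCLM.symm.continuous.comp ((h 0).prodMk (h 1))

instance : CompactSpace S2 := Metric.sphere.compactSpace _ _

open ComplexConjugate

def north : S2 := ⟨WithLp.toLp 2 ![0, 0, 1], (mem_iff _).2 (by simp)⟩

theorem height_north : height north = 1 := rfl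

theorem horizontal_eq_zero_of_height_eq_one {x : S2} (h : height x = 1) : horizontal x = 0 :=
  Complex.normSq_eq_zero.1 (by rw [normSq_horizontal, h]; norm_num)

theorem eq_north_of_height_eq_one {x : S2} (h : height x = 1) : x = north := by
  refine ext_horizontal_height ?_ h
  rw [horizontal_eq_zero_of_height_eq_one h]
  rfl

/-- Two continuous choices of homogeneous coordinates for the stereographic projection from the
north pole, valid away from the north and the south pole respectively. -/
noncomputable def homCoordsSouth (x : S2) : ℂ × ℂ := (horizontal x, ((1 - height x : ℝ) : ℂ))

noncomputable def homCoordsNorth (x : S2) : ℂ × ℂ :=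
  (((1 + height x : ℝ) : ℂ), conj (horizontal x))

/-- Discontinuous, but canonical: the north pole goes to `∞ = [1 : 0]`. -/
noncomputable def homCoords (x : S2) : ℂ × ℂ := if height x = 1 then (1, 0) else homCoordsSouth x

theorem homCoords_ne_zero (x : S2) : homCoords x ≠ 0 := by
  unfold homCoords homCoordsSouth
  split_ifs with h
  · simp
  · refine fun h0 => h ?_
    have := congrArg Prod.snd h0
    simp only [Prod.snd_zero, Complex.ofReal_eq_zero, sub_eq_zero] at this
    exact this.symm

theorem exists_smul_homCoords_eq_homCoordsNorth {x : S2} (hx : height x ≠ -1) :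
    ∃ c : ℂˣ, (c : ℂ) • homCoords x = homCoordsNorth x := by
  unfold homCoords homCoordsNorth homCoordsSouth
  split_ifs with h
  · refine ⟨Units.mk0 2 two_ne_zero, Prod.ext ?_ ?_⟩
    · norm_num [h]
    · simp [horizontal_eq_zero_of_height_eq_one h]
  · have hne : horizontal x ≠ 0 := fun h0 => by
      have hsq := normSq_horizontal x
      rw [h0, map_zero] at hsq
      have : (1 - height x) * (1 + height x) = 0 := by linear_combination -hsq
      rcases mul_eq_zero.1 this with h1 | h1
      exacts [h (by linarith), hx (by linarith)]
    have hnum : ((1 + height x : ℝ) : ℂ) ≠ 0 := by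
      rw [Complex.ofReal_ne_zero]
      exact fun h1 => hx (by linarith)
    refine ⟨Units.mk0 _ (div_ne_zero hnum hne), Prod.ext ?_ ?_⟩
    · exact div_mul_cancel₀ _ hne
    · show ((1 + height x : ℝ) : ℂ) / horizontal x * ((1 - height x : ℝ) : ℂ) =
        conj (horizontal x)
      rw [div_mul_eq_mul_div, div_eq_iff hne, mul_comm (conj _), Complex.mul_conj,
        normSq_horizontal]
      push_cast
      ring

noncomputable def stereo (x : S2) : ℂ := horizontal x / ((1 - height x : ℝ) : ℂ)

theorem projRoot_homCoords (x : S2) :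
    projRoot (homCoords x) = if height x = 1 then none else some (stereo x) := by
  unfold homCoords homCoordsSouth
  split_ifs with h
  · simp [projRoot]
  · have : ((1 - height x : ℝ) : ℂ) ≠ 0 := by
      rw [Complex.ofReal_ne_zero, sub_ne_zero]
      exact Ne.symm h
    simp only [projRoot, this, if_false, stereo]

theorem normSq_stereo {x : S2} (hx : height x ≠ 1) :
    Complex.normSq (stereo x) = (1 + height x) / (1 - height x) := by
  have : 1 - height x ≠ 0 := sub_ne_zero.2 (Ne.symm hx)
  rw [stereo, map_div₀, normSq_horizontal, Complex.normSq_ofReal]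
  field_simp
  ring

theorem height_eq_of_stereo {x : S2} (hx : height x ≠ 1) :
    height x = (Complex.normSq (stereo x) - 1) / (Complex.normSq (stereo x) + 1) := by
  have h1 : 1 - height x ≠ 0 := sub_ne_zero.2 (Ne.symm hx)
  have h2 : 1 + height x + (1 - height x) ≠ 0 := by norm_num
  rw [normSq_stereo hx]
  field_simp
  ring

theorem horizontal_eq_of_stereo {x : S2} (hx : height x ≠ 1) :
    horizontal x = stereo x * ((1 - height x : ℝ) : ℂ) := by
  rw [stereo, div_mul_cancel₀]
  rw [Complex.ofReal_ne_zero, sub_ne_zero]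
  exact Ne.symm hx

theorem injective_projRoot_homCoords : Function.Injective (projRoot ∘ homCoords) := by
  intro x y hxy
  simp only [Function.comp_apply, projRoot_homCoords] at hxy
  split_ifs at hxy with hx hy hy
  · rw [eq_north_of_height_eq_one hx, eq_north_of_height_eq_one hy]
  · have hs := Option.some_injective _ hxy
    have hh : height x = height y := by rw [height_eq_of_stereo hx, height_eq_of_stereo hy, hs]
    refine ext_horizontal_height ?_ hh
    rw [horizontal_eq_of_stereo hx, horizontal_eq_of_stereo hy, hs, hh]
noncomputable def ofComplex (z : ℂ) : S2 :=
  ⟨WithLp.toLp 2 ![2 * z.re / (Complex.normSq z + 1), 2 * z.im / (Complex.normSq z + 1),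
    (Complex.normSq z - 1) / (Complex.normSq z + 1)], (mem_iff _).2 <| by
    have : Complex.normSq z + 1 ≠ 0 := by linarith [Complex.normSq_nonneg z]
    simp only [Matrix.cons_val_zero, Matrix.cons_val_one, Matrix.cons_val_two,
      Matrix.head_cons, Matrix.tail_cons, Complex.normSq_apply] at this ⊢
    field_simp
    ring⟩

theorem homCoords_ofComplex (z : ℂ) :
    homCoords (ofComplex z) = ((2 / (Complex.normSq z + 1) : ℝ) : ℂ) • (z, 1) := by
  have hpos : Complex.normSq z + 1 ≠ 0 := by linarith [Complex.normSq_nonneg z]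
  have hh : height (ofComplex z) ≠ 1 := by
    show (Complex.normSq z - 1) / (Complex.normSq z + 1) ≠ 1
    rw [Ne, div_eq_one_iff_eq hpos]
    linarith
  rw [homCoords, if_neg hh, homCoordsSouth, Prod.smul_mk, smul_eq_mul, smul_eq_mul, mul_one]
  refine Prod.ext (Complex.ext ?_ ?_) (Complex.ofReal_inj.2 ?_)
  · rw [Complex.re_ofReal_mul]
    exact mul_div_right_comm _ _ _
  · rw [Complex.im_ofReal_mul]
    exact mul_div_right_comm _ _ _
  · show 1 - (Complex.normSq z - 1) / (Complex.normSq z + 1) = 2 / (Complex.normSq z + 1)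
    field_simp
    ring

theorem exists_smul_homCoords_eq {v : ℂ × ℂ} (hv : v ≠ 0) :
    ∃ x : S2, ∃ c : ℂˣ, (c : ℂ) • homCoords x = v := by
  by_cases h : v.2 = 0
  · have h1 : v.1 ≠ 0 := fun h1 => hv (Prod.ext h1 h)
    refine ⟨north, Units.mk0 _ h1, ?_⟩
    rw [homCoords, if_pos height_north]
    exact Prod.ext (mul_one _) (by simp [h])
  · have hr : ((2 / (Complex.normSq (v.1 / v.2) + 1) : ℝ) : ℂ) ≠ 0 := by
      rw [Complex.ofReal_ne_zero]
      exact div_ne_zero two_ne_zero (by linarith [Complex.normSq_nonneg (v.1 / v.2)])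
    refine ⟨ofComplex (v.1 / v.2), Units.mk0 (v.2 / _) (div_ne_zero h hr), ?_⟩
    rw [homCoords_ofComplex, smul_smul, Units.val_mk0, div_mul_cancel₀ _ hr]
    exact Prod.ext (mul_div_cancel₀ _ h) (mul_one _)

theorem exists_continuous_smul_homCoords_eventually (x₀ : S2) :
    ∃ g : S2 → ℂ × ℂ, Continuous g ∧ ∀ᶠ x in 𝓝 x₀, ∃ c : ℂˣ, (c : ℂ) • homCoords x = g x := by
  by_cases h₀ : height x₀ = 1
  · refine ⟨homCoordsNorth, by unfold homCoordsNorth; fun_prop, ?_⟩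
    have : ∀ᶠ x in 𝓝 x₀, height x ≠ -1 :=
      continuous_height.continuousAt.eventually_ne (by rw [h₀]; norm_num)
    exact this.mono fun x => exists_smul_homCoords_eq_homCoordsNorth
  · refine ⟨homCoordsSouth, by unfold homCoordsSouth; fun_prop, ?_⟩
    exact (continuous_height.continuousAt.eventually_ne h₀).mono fun x hx =>
      ⟨1, by rw [Units.val_one, one_smul, homCoords, if_neg hx]⟩

end S2

open S2

noncomputable def toCP {d : ℕ} (p : Fin d → S2) : CP d :=
  ofPoly (prodLinFactor (homCoords ∘ p)) (natDegree_prodLinFactor_le _)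
    (prodLinFactor_ne_zero fun i => homCoords_ne_zero (p i))

theorem toCP_eq_ofPoly {d : ℕ} {p : Fin d → S2} {w : Fin d → ℂ × ℂ} (hw : ∀ i, w i ≠ 0)
    (h : ∀ i, ∃ c : ℂˣ, (c : ℂ) • homCoords (p i) = w i) :
    toCP p =
      ofPoly (prodLinFactor w) (natDegree_prodLinFactor_le w) (prodLinFactor_ne_zero hw) := by
  choose c hc using h
  refine ofPoly_eq_ofPoly_iff.2 ⟨∏ i, c i, ?_⟩
  rw [← funext hc, prodLinFactor_smul, Units.coe_prod]
  rfl

theorem toCP_eq_of_permRel {d : ℕ} {p q : Fin d → S2} (h : permRel d p q) : toCP p = toCP q := by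
  obtain ⟨π, rfl⟩ := h
  have : prodLinFactor (homCoords ∘ p ∘ π) = prodLinFactor (homCoords ∘ p) :=
    prodLinFactor_comp_perm (homCoords ∘ p) π
  simp only [toCP, this]
  rfl

theorem permRel_of_toCP_eq {d : ℕ} {p q : Fin d → S2} (h : toCP p = toCP q) : permRel d p q := by
  obtain ⟨c, hc⟩ := ofPoly_eq_ofPoly_iff.1 h
  have hmap := map_projRoot_eq_of_prodLinFactor_eq (fun i => homCoords_ne_zero (p i))
    (fun i => homCoords_ne_zero (q i)) c.ne_zero hc.symm
  obtain ⟨σ, hσ⟩ := Equiv.Perm.exists_comp_eq_of_map_univ_eq hmap.symm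
  exact ⟨σ, injective_projRoot_homCoords.comp_left hσ⟩

theorem exists_toCP_eq {d : ℕ} (x : CP d) : ∃ p : Fin d → S2, toCP p = x := by
  obtain ⟨Q, hd, h0, rfl⟩ := exists_ofPoly_eq x
  obtain ⟨w, hw, c, hc, rfl⟩ := exists_eq_C_mul_prodLinFactor h0 hd
  choose p u hu using fun i => exists_smul_homCoords_eq (hw i)
  refine ⟨p, (toCP_eq_ofPoly hw fun i => ⟨u i, hu i⟩).trans ?_⟩
  exact ofPoly_eq_ofPoly_iff.2 ⟨Units.mk0 c hc, by rw [Units.val_mk0]⟩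

theorem continuousAt_toCP {d : ℕ} (p₀ : Fin d → S2) : ContinuousAt toCP p₀ := by
  choose g hg hsmul using fun i => exists_continuous_smul_homCoords_eventually (p₀ i)
  have hG : Continuous fun (p : Fin d → S2) i => g i (p i) :=
    continuous_pi fun i => (hg i).comp (continuous_apply i)
  have hf : Continuous fun p : Fin d → S2 =>
      degreeLTEquiv ℂ (d + 1) ⟨_, prodLinFactor_mem_degreeLT fun i => g i (p i)⟩ :=
    continuous_pi fun k => continuous_coeff_prodLinFactor hG k
  have hev : ∀ᶠ p in 𝓝 p₀, ∀ i, ∃ c : ℂˣ, (c : ℂ) • homCoords (p i) = g i (p i) :=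
    eventually_all.2 fun i => (continuous_apply i).continuousAt.eventually (hsmul i)
  refine continuousAt_of_eventually_eq_quot_mk (K := ℂ) (V := Fin (d + 1) → ℂ) hf ?_
  filter_upwards [hev] with p hp
  have hw : ∀ i, g i (p i) ≠ 0 := fun i => by
    obtain ⟨c, hc⟩ := hp i
    exact hc ▸ smul_ne_zero c.ne_zero (homCoords_ne_zero (p i))
  exact ⟨_, toCP_eq_ofPoly hw hp⟩

/-- The quotient of `(S²)^d` by the coordinate-permutation action of the symmetric group `S_d`
is homeomorphic to complex projective `d`-space. -/
theorem quotient_sphere_pow_homeomorph_CP (d : ℕ) :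
    Nonempty (Quot (permRel d) ≃ₜ CP d) := by
  have : T2Space (CP d) := t2Space_quot_projRel
  let F : Quot (permRel d) → CP d := Quot.lift toCP fun _ _ => toCP_eq_of_permRel
  have hF : Function.Bijective F :=
    ⟨fun x y => Quot.induction_on₂ x y fun _ _ h => Quot.sound (permRel_of_toCP_eq h),
      fun x => let ⟨p, hp⟩ := exists_toCP_eq x; ⟨Quot.mk _ p, hp⟩⟩
  have hFc : Continuous F := continuous_quot_lift _ (continuous_iff_continuousAt.2 continuousAt_toCP)
  exact ⟨hFc.homeoOfEquivCompactToT2 (f := .ofBijective F hF)⟩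
end

section
/- For d ≥ 1, let C_d = σ × [0,1] where σ is a (d−1)-simplex with vertices u_1,...,u_d. Up to isomorphism, there is a unique simplicial subdivision of C_d using only the 2d vertices of C_d: its facets are the d simplices a_1⋯a_i b_i⋯b_d for 1 ≤ i ≤ d, where a_j = (u_j,0) and b_j = (u_j,1). -/
open scoped Classical

/-- The ambient space of the prism `σ × [0,1]` over a `(d−1)`-simplex `σ`. -/
abbrev PrismSpace (d : ℕ) : Type := (Fin d → ℝ) × ℝ

/-- The bottom vertices `a_j = (u_j, 0)` of the prism (with `u_j` the standard basis points). -/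
def ptA (d : ℕ) (j : Fin d) : PrismSpace d := (Pi.single j 1, 0)

/-- The top vertices `b_j = (u_j, 1)` of the prism. -/
def ptB (d : ℕ) (j : Fin d) : PrismSpace d := (Pi.single j 1, 1)

/-- The prism `C_d = σ × [0,1]`, as the convex hull of its `2d` vertices. -/
def prism (d : ℕ) : Set (PrismSpace d) :=
  convexHull ℝ (Set.range (ptA d) ∪ Set.range (ptB d))

/-- The facet `a_{π(1)} ⋯ a_{π(i)} b_{π(i)} ⋯ b_{π(d)}` of the staircase triangulation of the
prism, relabelled by a permutation `π` of the vertices of `σ`. -/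
noncomputable def stairFacet (d : ℕ) (π : Equiv.Perm (Fin d)) (i : Fin d) :
    Finset (PrismSpace d) :=
  ((Finset.univ.filter fun j : Fin d => j ≤ i).image fun j => ptA d (π j)) ∪
    ((Finset.univ.filter fun j : Fin d => i ≤ j).image fun j => ptB d (π j))

/-- The faces of the (relabelled) staircase triangulation: all nonempty subsets of facets. -/
def stairFaces (d : ℕ) (π : Equiv.Perm (Fin d)) : Set (Finset (PrismSpace d)) :=
  {s | s.Nonempty ∧ ∃ i : Fin d, s ⊆ stairFacet d π i}


/-!
Write a point of the prism as `(y, τ)` with `y ∈ σ`. The convex hull of the vertices `a_j (j ∈ A)`,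
`b_j (j ∈ B)` consists of the points with `y = α + β`, where `α ≥ 0` is supported on `A`, `β ≥ 0`
on `B` and `∑ α = 1 - τ`; these vertices are affinely independent iff at most one column `j` is
doubled (`j ∈ A ∩ B`). So the staircase simplex with bottom columns `A` and doubled column
`m ∈ A` is the slab `∑_{A \ {m}} y ≤ 1 - τ ≤ ∑_{A} y`, and for `A = π {0, …, i}` these slabs tile
the prism and meet in common faces.

Conversely, let `K` be a subdivision. The axis point at depth `(i + 1/2) / d` lies in a face of `K`,
which must be a staircase simplex with `#A = i + 1`. Consecutive ones share the centroid of the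
face `a_A b_{Aᶜ}` of the smaller one, which forces `A_i ⊆ A_{i+1}`, so `A_i = π {0, …, i}` for a
permutation `π`. Finally, the centroid of any face of `K` lies in one of these facets, so the
whole face does.
-/

open Finset

lemma exists_le_and_le_succ {α : Type*} [LinearOrder α] {P : ℕ → α} {δ : α} (h0 : P 0 ≤ δ) :
    ∀ {n : ℕ}, 0 < n → δ ≤ P n → ∃ k < n, P k ≤ δ ∧ δ ≤ P (k + 1)
  | n + 1, _, hn => by
    by_cases h : 0 < n ∧ δ ≤ P n
    · obtain ⟨k, hk, hPk⟩ := exists_le_and_le_succ h0 h.1 h.2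
      exact ⟨k, by omega, hPk⟩
    · refine ⟨n, by omega, ?_, hn⟩
      rcases Nat.eq_zero_or_pos n with rfl | hpos
      · exact h0
      · exact (not_le.1 fun h' => h ⟨hpos, h'⟩).le

section Simplices

variable {R E : Type*} [Field R] [LinearOrder R] [IsStrictOrderedRing R] [AddCommGroup E]
  [Module R E] {s t : Finset E}

lemma AffineIndependent.subset_of_sum_smul_mem_convexHull
    (hs : AffineIndependent R ((↑) : s → E)) (hts : t ⊆ s) {w : E → R}
    (hw : ∀ p ∈ s, w p ≠ 0) (hw1 : ∑ p ∈ s, w p = 1)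
    (ht : ∑ p ∈ s, w p • p ∈ convexHull R (t : Set E)) : s ⊆ t := by
  obtain ⟨v, -, hv1, hvx⟩ := Finset.mem_convexHull'.1 ht
  have hcoord := hs.eq_of_sum_eq_sum_subtype (w₁ := w) (w₂ := fun p => if p ∈ t then v p else 0)
    (by rw [hw1, sum_ite_mem, inter_eq_right.2 hts, hv1])
    (by simp_rw [ite_smul, zero_smul]; rw [sum_ite_mem, inter_eq_right.2 hts, hvx])
  intro p hp
  by_contra hpt
  exact hw p hp (by rw [hcoord p hp, if_neg hpt])

lemma convexHull_inter_subset_of_subset {F G : Finset E}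
    (hF : AffineIndependent R ((↑) : F → E)) (hG : AffineIndependent R ((↑) : G → E))
    (hFG : convexHull R (F : Set E) ∩ convexHull R ↑G ⊆ convexHull R (↑F ∩ ↑G))
    (hs : s ⊆ F) (ht : t ⊆ G) :
    convexHull R (s : Set E) ∩ convexHull R ↑t ⊆ convexHull R (↑s ∩ ↑t) := by
  rintro x ⟨hxs, hxt⟩
  have hxFG : x ∈ convexHull R ((F ∩ G : Finset E) : Set E) := by
    rw [coe_inter]
    exact hFG ⟨convexHull_mono (coe_subset.2 hs) hxs, convexHull_mono (coe_subset.2 ht) hxt⟩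
  have hxsG : x ∈ convexHull R ((s ∩ G : Finset E) : Set E) := by
    rw [← inter_eq_left.2 hs, inter_assoc, coe_inter, hF.convexHull_inter hs inter_subset_left]
    exact ⟨hxs, hxFG⟩
  have hx : x ∈ convexHull R (↑(s ∩ G) ∩ ↑t) := by
    rw [hG.convexHull_inter inter_subset_right ht]
    exact ⟨hxsG, hxt⟩
  exact convexHull_mono (Set.inter_subset_inter_left _ (coe_subset.2 inter_subset_left)) hx

end Simplices

variable {d : ℕ}

section Vertices

lemma single_one_injective : Function.Injective fun j : Fin d => (Pi.single j 1 : Fin d → ℝ) :=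
  fun j k h => by
    by_contra hjk
    simpa [Pi.single_apply, Ne.symm hjk] using congrFun h j

lemma ptA_injective : Function.Injective (ptA d) :=
  fun _ _ h => single_one_injective (congrArg Prod.fst h)

lemma ptB_injective : Function.Injective (ptB d) :=
  fun _ _ h => single_one_injective (congrArg Prod.fst h)

@[simp] lemma ptA_inj {j k : Fin d} : ptA d j = ptA d k ↔ j = k := ptA_injective.eq_iff

@[simp] lemma ptB_inj {j k : Fin d} : ptB d j = ptB d k ↔ j = k := ptB_injective.eq_iff

@[simp] lemma ptA_ne_ptB (j k : Fin d) : ptA d j ≠ ptB d k := by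
  simp [ptA, ptB, Prod.ext_iff]

@[simp] lemma ptB_ne_ptA (j k : Fin d) : ptB d j ≠ ptA d k := (ptA_ne_ptB k j).symm

lemma sum_smul_ptA (α : Fin d → ℝ) : ∑ j, α j • ptA d j = (α, 0) := by
  ext <;> simp [ptA, Prod.fst_sum, Prod.snd_sum, Finset.sum_apply, Pi.single_apply]

lemma sum_smul_ptB (β : Fin d → ℝ) : ∑ j, β j • ptB d j = (β, ∑ j, β j) := by
  ext <;> simp [ptB, Prod.fst_sum, Prod.snd_sum, Finset.sum_apply, Pi.single_apply]

end Vertices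

noncomputable def prismVerts (A B : Finset (Fin d)) : Finset (PrismSpace d) :=
  A.image (ptA d) ∪ B.image (ptB d)

section PrismVerts

variable {A B A' B' : Finset (Fin d)}

@[simp] lemma ptA_mem_prismVerts {j : Fin d} : ptA d j ∈ prismVerts A B ↔ j ∈ A := by
  simp [prismVerts]

@[simp] lemma ptB_mem_prismVerts {j : Fin d} : ptB d j ∈ prismVerts A B ↔ j ∈ B := by
  simp [prismVerts]

lemma prismVerts_subset_prismVerts :
    prismVerts A B ⊆ prismVerts A' B' ↔ A ⊆ A' ∧ B ⊆ B' := by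
  simp [prismVerts, Finset.subset_iff, or_imp, forall_and]

lemma coe_prismVerts_univ : (prismVerts (univ : Finset (Fin d)) univ : Set (PrismSpace d)) =
    Set.range (ptA d) ∪ Set.range (ptB d) := by
  simp [prismVerts]

lemma prism_eq_convexHull_prismVerts :
    prism d = convexHull ℝ (prismVerts (univ : Finset (Fin d)) univ : Set (PrismSpace d)) := by
  rw [prism, coe_prismVerts_univ]

lemma exists_eq_prismVerts {s : Finset (PrismSpace d)}
    (hs : (s : Set (PrismSpace d)) ⊆ Set.range (ptA d) ∪ Set.range (ptB d)) :
    ∃ A B, s = prismVerts A B := by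
  refine ⟨({j | ptA d j ∈ s} : Finset _), ({j | ptB d j ∈ s} : Finset _),
    Finset.ext fun p => ⟨fun hp => ?_, ?_⟩⟩
  · rcases hs hp with ⟨j, rfl⟩ | ⟨j, rfl⟩ <;> simpa using hp
  · simp only [prismVerts, mem_union, mem_image, mem_filter, mem_univ, true_and]
    rintro (⟨j, hj, rfl⟩ | ⟨j, hj, rfl⟩) <;> exact hj

lemma sum_prismVerts {M : Type*} [AddCommMonoid M] (f : PrismSpace d → M) :
    ∑ p ∈ prismVerts A B, f p = ∑ j ∈ A, f (ptA d j) + ∑ j ∈ B, f (ptB d j) := by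
  rw [prismVerts, sum_union, sum_image (fun _ _ _ _ h => ptA_injective h),
    sum_image (fun _ _ _ _ h => ptB_injective h)]
  simp [Finset.disjoint_left]

lemma sum_smul_prismVerts (w : PrismSpace d → ℝ) :
    ∑ p ∈ prismVerts A B, w p • p =
      (A.piecewise (fun j => w (ptA d j)) 0 + B.piecewise (fun j => w (ptB d j)) 0,
        ∑ j, B.piecewise (fun j => w (ptB d j)) 0 j) := by
  have key (C : Finset (Fin d)) (f : Fin d → ℝ) (v : Fin d → PrismSpace d) :
      ∑ j ∈ C, f j • v j = ∑ j, C.piecewise f 0 j • v j := by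
    simp [Finset.piecewise, ite_smul]
  rw [sum_prismVerts, key A, key B, sum_smul_ptA, sum_smul_ptB]
  simp

end PrismVerts

section Coordinates

variable {A B : Finset (Fin d)}

lemma mem_convexHull_prismVerts {x : PrismSpace d} :
    x ∈ convexHull ℝ (prismVerts A B : Set (PrismSpace d)) ↔
      ∃ α β : Fin d → ℝ, (∀ j, 0 ≤ α j) ∧ (∀ j, 0 ≤ β j) ∧ (∀ j ∉ A, α j = 0) ∧
        (∀ j ∉ B, β j = 0) ∧ ∑ j, (α j + β j) = 1 ∧ x = (α + β, ∑ j, β j) := by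
  constructor
  · rw [Finset.mem_convexHull']
    rintro ⟨w, hw0, hw1, rfl⟩
    refine ⟨A.piecewise (fun j => w (ptA d j)) 0, B.piecewise (fun j => w (ptB d j)) 0,
      fun j => ?_, fun j => ?_, fun j hj => piecewise_eq_of_notMem _ _ _ hj,
      fun j hj => piecewise_eq_of_notMem _ _ _ hj, ?_, sum_smul_prismVerts w⟩
    · by_cases hj : j ∈ A <;> simp [hj, hw0]
    · by_cases hj : j ∈ B <;> simp [hj, hw0]
    · rw [← hw1, sum_prismVerts, sum_add_distrib]
      simp [Finset.sum_piecewise]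
  · rintro ⟨α, β, hα, hβ, hαA, hβB, hsum, rfl⟩
    have hsupp {C : Finset (Fin d)} {γ : Fin d → ℝ} (hγ : ∀ j ∉ C, γ j = 0)
        (v : Fin d → PrismSpace d) : ∑ j ∈ C, γ j • v j = ∑ j, γ j • v j :=
      sum_subset (subset_univ C) fun j _ hj => by rw [hγ j hj, zero_smul]
    have hx : (α + β, ∑ j, β j) =
        ∑ i ∈ A.disjSum B, Sum.elim α β i • Sum.elim (ptA d) (ptB d) i := by
      rw [sum_disjSum]
      simp only [Sum.elim_inl, Sum.elim_inr]
      rw [hsupp hαA, hsupp hβB, sum_smul_ptA, sum_smul_ptB]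
      simp
    rw [hx]
    refine (convex_convexHull ℝ _).sum_mem (fun i _ => ?_) ?_ fun i hi => subset_convexHull ℝ _ ?_
    · cases i <;> simp [hα, hβ]
    · rw [sum_disjSum, ← hsum, sum_add_distrib]
      simp only [Sum.elim_inl, Sum.elim_inr]
      rw [sum_subset (subset_univ A) fun j _ hj => hαA j hj,
        sum_subset (subset_univ B) fun j _ hj => hβB j hj]
    · cases i <;> simpa using hi

lemma bounds_of_mem_convexHull_prismVerts {y : Fin d → ℝ} {τ : ℝ}
    (h : (y, τ) ∈ convexHull ℝ (prismVerts A B : Set (PrismSpace d))) :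
    (∀ j, 0 ≤ y j) ∧ ∑ j, y j = 1 ∧ (∀ j ∉ A ∪ B, y j = 0) ∧
      ∑ j ∈ A \ B, y j ≤ 1 - τ ∧ 1 - τ ≤ ∑ j ∈ A, y j := by
  obtain ⟨α, β, hα, hβ, hαA, hβB, hsum, hx⟩ := mem_convexHull_prismVerts.1 h
  simp only [Prod.mk.injEq] at hx
  obtain ⟨rfl, rfl⟩ := hx
  have hdepth : 1 - ∑ j, β j = ∑ j ∈ A, α j := by
    rw [← hsum, sum_add_distrib, sum_subset (subset_univ A) fun j _ hj => hαA j hj]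
    ring
  refine ⟨fun j => add_nonneg (hα j) (hβ j), hsum, fun j hj => ?_, ?_, ?_⟩
  · simp only [mem_union, not_or] at hj
    simp [hαA j hj.1, hβB j hj.2]
  · rw [hdepth]
    calc ∑ j ∈ A \ B, (α + β) j = ∑ j ∈ A \ B, α j :=
          sum_congr rfl fun j hj => by simp [hβB j (mem_sdiff.1 hj).2]
      _ ≤ ∑ j ∈ A, α j := sum_le_sum_of_subset_of_nonneg sdiff_subset fun j _ _ => hα j
  · rw [hdepth]
    exact sum_le_sum fun j _ => le_add_of_nonneg_right (hβ j)

end Coordinates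

section Independence

variable {A B : Finset (Fin d)}

lemma affineIndependent_prismVerts {m : Fin d} (hAB : A ∩ B ⊆ {m}) :
    AffineIndependent ℝ ((↑) : prismVerts A B → PrismSpace d) := by
  by_contra hdep
  obtain ⟨w, hw, -, p, hp, hwp⟩ := exists_nontrivial_relation_sum_zero_of_not_affine_ind hdep
  set α := A.piecewise (fun j => w (ptA d j)) 0
  set β := B.piecewise (fun j => w (ptB d j)) 0
  rw [sum_smul_prismVerts, Prod.mk_eq_zero] at hw
  have hcol (j : Fin d) : α j + β j = 0 := congrFun hw.1 j
  have hβ (j : Fin d) (hj : j ≠ m) : β j = 0 := by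
    by_cases hjA : j ∈ A
    · have hjB : j ∉ B := fun hjB => hj (mem_singleton.1 (hAB (mem_inter.2 ⟨hjA, hjB⟩)))
      exact piecewise_eq_of_notMem _ _ _ hjB
    · simpa [α, hjA] using hcol j
  have hβm : β m = 0 := by
    rw [← hw.2, sum_eq_single m (fun j _ hj => hβ j hj) (by simp)]
  have hβ0 (j : Fin d) : β j = 0 := by
    rcases eq_or_ne j m with rfl | hj
    exacts [hβm, hβ j hj]
  have hα0 (j : Fin d) : α j = 0 := by simpa [hβ0 j] using hcol j
  rcases mem_union.1 hp with hp | hp <;> obtain ⟨j, hj, rfl⟩ := mem_image.1 hp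
  · exact hwp (by simpa [α, hj] using hα0 j)
  · exact hwp (by simpa [β, hj] using hβ0 j)

/-- Two doubled columns `m ≠ n` would give the crossing diagonals `a_m b_n` and `a_n b_m` of a
rectangle. -/
lemma card_inter_le_one_of_affineIndependent
    (h : AffineIndependent ℝ ((↑) : prismVerts A B → PrismSpace d)) : #(A ∩ B) ≤ 1 := by
  refine card_le_one.2 fun m hm n hn => ?_
  simp only [mem_inter] at hm hn
  by_contra hmn
  have hmid : midpoint ℝ (ptA d m) (ptB d n) = midpoint ℝ (ptA d n) (ptB d m) := by
    simp only [midpoint_eq_smul_add]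
    congr 1
    ext <;> simp [ptA, ptB, add_comm]
  have hsub (j k : Fin d) (hj : j ∈ A) (hk : k ∈ B) : {ptA d j, ptB d k} ⊆ prismVerts A B := by
    simp [insert_subset_iff, hj, hk]
  have hempty : (({ptA d m, ptB d n} : Finset (PrismSpace d)) : Set (PrismSpace d)) ∩
      ({ptA d n, ptB d m} : Finset (PrismSpace d)) = ∅ := by
    ext p
    simp only [coe_insert, coe_singleton, Set.mem_inter_iff, Set.mem_insert_iff,
      Set.mem_singleton_iff, Set.mem_empty_iff_false, iff_false, not_and]
    rintro (rfl | rfl) <;> simp [hmn, Ne.symm hmn]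
  have hmem : midpoint ℝ (ptA d m) (ptB d n) ∈
      convexHull ℝ ↑({ptA d m, ptB d n} : Finset (PrismSpace d)) ∩
        convexHull ℝ ↑({ptA d n, ptB d m} : Finset (PrismSpace d)) := by
    refine ⟨?_, hmid ▸ ?_⟩ <;>
    · rw [coe_insert, coe_singleton, convexHull_pair]
      exact midpoint_mem_segment _ _
  rw [← h.convexHull_inter (hsub m n hm.1 hn.2) (hsub n m hn.1 hm.2), hempty,
    convexHull_empty] at hmem
  exact hmem

end Independence

noncomputable def stairSimplex (A : Finset (Fin d)) (m : Fin d) : Finset (PrismSpace d) :=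
  prismVerts A (Aᶜ ∪ {m})

section StairSimplex

variable {A : Finset (Fin d)} {m : Fin d}

lemma affineIndependent_stairSimplex :
    AffineIndependent ℝ ((↑) : stairSimplex A m → PrismSpace d) :=
  affineIndependent_prismVerts (m := m) fun j => by simp +contextual

lemma stairFacet_eq_stairSimplex (π : Equiv.Perm (Fin d)) (i : Fin d) :
    stairFacet d π i = stairSimplex ((Iic i).image π) (π i) := by
  have hB : (Ici i).image π = ((Iic i).image π)ᶜ ∪ {π i} := by
    ext j
    obtain ⟨k, rfl⟩ := π.surjective j
    simp only [mem_image, mem_Ici, mem_union, mem_compl, mem_Iic, mem_singleton,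
      EmbeddingLike.apply_eq_iff_eq, exists_eq_right]
    grind
  rw [stairSimplex, ← hB, prismVerts, stairFacet, filter_ge_eq_Iic, filter_le_eq_Ici,
    image_image, image_image]
  rfl

lemma mem_convexHull_stairSimplex (hm : m ∈ A) {y : Fin d → ℝ} {τ : ℝ} (hy : ∀ j, 0 ≤ y j)
    (hsum : ∑ j, y j = 1) (hlo : ∑ j ∈ A.erase m, y j ≤ 1 - τ) (hhi : 1 - τ ≤ ∑ j ∈ A, y j) :
    (y, τ) ∈ convexHull ℝ (stairSimplex A m : Set (PrismSpace d)) := by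
  set α := (A.erase m).piecewise y 0 + Pi.single m (1 - τ - ∑ j ∈ A.erase m, y j)
  have hym : ∑ j ∈ A, y j = ∑ j ∈ A.erase m, y j + y m := (sum_erase_add A y hm).symm
  have hαm : α m = 1 - τ - ∑ j ∈ A.erase m, y j := by simp [α]
  have hα (j : Fin d) (hj : j ≠ m) : α j = if j ∈ A then y j else 0 := by
    by_cases hjA : j ∈ A <;> simp [α, hj, hjA]
  refine mem_convexHull_prismVerts.2 ⟨α, y - α, fun j => ?_, fun j => ?_, fun j hj => ?_,
    fun j hj => ?_, by simpa using hsum, ?_⟩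
  · rcases eq_or_ne j m with rfl | hj
    · linarith
    · rw [hα j hj]; split_ifs <;> simp [hy j]
  · rcases eq_or_ne j m with rfl | hj
    · simp only [Pi.sub_apply]; linarith
    · simp only [Pi.sub_apply, hα j hj]; split_ifs <;> simp [hy j]
  · rw [hα j (by rintro rfl; exact hj hm), if_neg hj]
  · simp only [mem_union, mem_compl, mem_singleton, not_or, not_not] at hj
    simp [Pi.sub_apply, hα j hj.2, hj.1]
  · have hα_sum : ∑ j, α j = 1 - τ := by simp [α, sum_add_distrib, sum_piecewise]
    simp [sum_sub_distrib, hsum, hα_sum]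

end StairSimplex

noncomputable def axisPoint (d : ℕ) (s : ℝ) : PrismSpace d := (fun _ => (d : ℝ)⁻¹, 1 - s / d)

section AxisPoint

variable {A B : Finset (Fin d)} {m : Fin d} {s : ℝ}

lemma axisPoint_mem_convexHull_stairSimplex (hm : m ∈ A) (hlo : (#A : ℝ) - 1 ≤ s)
    (hhi : s ≤ #A) : axisPoint d s ∈ convexHull ℝ (stairSimplex A m : Set (PrismSpace d)) := by
  have hd : (0 : ℝ) < d := Nat.cast_pos.2 m.pos
  refine mem_convexHull_stairSimplex hm (fun _ => by positivity) ?_ ?_ ?_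
  · simp [hd.ne']
  · rw [sum_const, card_erase_of_mem hm, nsmul_eq_mul, Nat.cast_pred (card_pos.2 ⟨m, hm⟩)]
    field_simp
    linarith
  · rw [sum_const, nsmul_eq_mul]
    field_simp
    linarith

lemma card_le_of_axisPoint_mem_convexHull_prismVerts
    (h : axisPoint d s ∈ convexHull ℝ (prismVerts A B : Set (PrismSpace d))) :
    A ∪ B = univ ∧ (#(A \ B) : ℝ) ≤ s ∧ s ≤ #A := by
  obtain ⟨-, hsum, hsupp, hlo, hhi⟩ := bounds_of_mem_convexHull_prismVerts h
  have hd : (0 : ℝ) < d := by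
    rcases Nat.eq_zero_or_pos d with rfl | hd
    · simp at hsum
    · exact Nat.cast_pos.2 hd
  simp only [sum_const, nsmul_eq_mul, sub_sub_cancel] at hlo hhi
  refine ⟨eq_univ_of_forall fun j => ?_, ?_, ?_⟩
  · by_contra hj
    exact inv_ne_zero hd.ne' (hsupp j hj)
  · rwa [← div_eq_mul_inv, div_le_div_iff_of_pos_right hd] at hlo
  · rwa [← div_eq_mul_inv, div_le_div_iff_of_pos_right hd] at hhi

lemma sum_smul_prismVerts_compl (hd : d ≠ 0) (A : Finset (Fin d)) :
    ∑ p ∈ prismVerts A Aᶜ, (d : ℝ)⁻¹ • p = axisPoint d #A := by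
  rw [sum_smul_prismVerts, axisPoint]
  have hcard : (#Aᶜ : ℝ) = d - #A := by
    rw [card_compl, Fintype.card_fin, Nat.cast_sub (by simpa using card_le_univ A)]
  congr 1
  · ext j
    by_cases hj : j ∈ A <;> simp [hj]
  · simp [sum_piecewise, hcard]
    field_simp

/-- A face through the axis point at the half-integral depth `(i + 1/2) / d` cannot be a simplex
`prismVerts A Aᶜ`, which meets the axis only at depth `#A / d`; so it doubles exactly one
column. -/
lemma eq_stairSimplex_of_axisPoint_mem {i : ℕ}
    (hind : AffineIndependent ℝ ((↑) : prismVerts A B → PrismSpace d))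
    (h : axisPoint d (i + 2⁻¹) ∈ convexHull ℝ (prismVerts A B : Set (PrismSpace d))) :
    ∃ m ∈ A, #A = i + 1 ∧ B = Aᶜ ∪ {m} := by
  obtain ⟨hAB, hlo, hhi⟩ := card_le_of_axisPoint_mem_convexHull_prismVerts h
  have hdouble := card_inter_le_one_of_affineIndependent hind
  have hsplit := card_sdiff_add_card_inter A B
  have hlo' : #(A \ B) < i + 1 := by exact_mod_cast (show (#(A \ B) : ℝ) < i + 1 by linarith)
  have hhi' : i + 1 ≤ #A := by exact_mod_cast (show (i : ℝ) < #A by linarith)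
  obtain ⟨m, hm⟩ := card_eq_one.1 (show #(A ∩ B) = 1 by omega)
  have hmAB := mem_inter.1 (hm ▸ mem_singleton_self m)
  refine ⟨m, hmAB.1, by omega, Finset.ext fun j => ?_⟩
  have hj : j ∈ A ∪ B := hAB ▸ mem_univ j
  have := Finset.ext_iff.1 hm j
  simp only [mem_inter, mem_singleton, mem_union, mem_compl] at this hj ⊢
  grind

end AxisPoint

section Staircase

variable (π : Equiv.Perm (Fin d))

lemma exists_mem_convexHull_stairFacet {x : PrismSpace d} (hx : x ∈ prism d) :
    ∃ i, x ∈ convexHull ℝ (stairFacet d π i : Set (PrismSpace d)) := by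
  obtain ⟨y, τ⟩ := x
  rw [prism_eq_convexHull_prismVerts] at hx
  obtain ⟨hy, hsum, -, hlo, hhi⟩ := bounds_of_mem_convexHull_prismVerts hx
  have hd : 0 < d := Nat.pos_of_ne_zero fun hd => by subst hd; simp at hsum
  set P : ℕ → ℝ := fun k => ∑ j ∈ univ.filter (fun j : Fin d => (j : ℕ) < k), y (π j)
  have hP (i : Fin d) : P i = ∑ j ∈ ((Iic i).image π).erase (π i), y j ∧
      P (i + 1) = ∑ j ∈ (Iic i).image π, y j := by
    rw [← image_erase π.injective, sum_image π.injective.injOn, sum_image π.injective.injOn]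
    constructor <;> refine sum_congr (Finset.ext fun j => ?_) fun _ _ => rfl <;>
      simp only [mem_filter, mem_univ, true_and, mem_erase, mem_Iic] <;> omega
  obtain ⟨k, hk, hPk⟩ := exists_le_and_le_succ (P := P) (δ := 1 - τ) (by simpa [P] using hlo) hd
    (by simpa [P, Equiv.sum_comp π y, hsum] using hhi)
  refine ⟨⟨k, hk⟩, ?_⟩
  rw [stairFacet_eq_stairSimplex]
  exact mem_convexHull_stairSimplex (mem_image_of_mem π (mem_Iic.2 le_rfl)) hy hsum
    ((hP ⟨k, hk⟩).1 ▸ hPk.1) ((hP ⟨k, hk⟩).2 ▸ hPk.2)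

/-- A common point `(y, τ)` has depth `1 - τ` at most `∑_{A} y` and at least `∑_{A' \ {m'}} y`,
so `y` vanishes on the columns in between and the point lies in `prismVerts A (A'ᶜ ∪ {m'})`. -/
lemma convexHull_stairSimplex_inter_subset {A A' : Finset (Fin d)} {m m' : Fin d}
    (hA : A ⊆ A'.erase m') :
    convexHull ℝ (stairSimplex A m : Set (PrismSpace d)) ∩ convexHull ℝ ↑(stairSimplex A' m') ⊆
      convexHull ℝ (↑(stairSimplex A m) ∩ ↑(stairSimplex A' m')) := by
  rintro ⟨y, τ⟩ ⟨h, h'⟩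
  obtain ⟨hy, hsum, -, -, hhi⟩ := bounds_of_mem_convexHull_prismVerts h
  obtain ⟨-, -, -, hlo, -⟩ := bounds_of_mem_convexHull_prismVerts h'
  rw [show A' \ (A'ᶜ ∪ {m'}) = A'.erase m' by ext; simp] at hlo
  have hle := sum_le_sum_of_subset_of_nonneg hA fun j _ _ => hy j
  have hgap : ∀ j ∈ A'.erase m' \ A, y j = 0 :=
    (sum_eq_zero_iff_of_nonneg fun j _ => hy j).1 (by rw [sum_sdiff_eq_sub hA]; linarith)
  have hm' : m' ∉ A := fun h => by simpa using hA h
  have hAA' : A ⊆ A' := hA.trans (erase_subset m' A')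
  rw [← coe_inter]
  refine convexHull_mono (coe_subset.2 (subset_inter ?_ ?_)) (mem_convexHull_prismVerts.2
    ⟨A.piecewise y 0, y - A.piecewise y 0, fun j => ?_, fun j => ?_,
      fun j hj => piecewise_eq_of_notMem _ _ _ hj, fun j hj => ?_, by simpa using hsum, ?_⟩)
    (s := ↑(prismVerts A (A'ᶜ ∪ {m'})))
  · refine prismVerts_subset_prismVerts.2 ⟨Subset.rfl, union_subset ?_ ?_⟩
    · exact (compl_subset_compl.2 hAA').trans subset_union_left
    · exact singleton_subset_iff.2 (mem_union_left _ (mem_compl.2 hm'))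
  · exact prismVerts_subset_prismVerts.2 ⟨hAA', Subset.rfl⟩
  · by_cases hj : j ∈ A <;> simp [hj, hy j]
  · by_cases hj : j ∈ A <;> simp [hj, hy j]
  · simp only [mem_union, mem_compl, mem_singleton, not_or, not_not] at hj
    by_cases hjA : j ∈ A
    · simp [hjA]
    · simp [hjA, hgap j (mem_sdiff.2 ⟨mem_erase.2 ⟨hj.2, hj.1⟩, hjA⟩)]
  · simp [sum_sub_distrib, sum_piecewise, hsum]
    linarith

lemma convexHull_stairFacet_inter_subset (π : Equiv.Perm (Fin d)) (i k : Fin d) :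
    convexHull ℝ (stairFacet d π i : Set (PrismSpace d)) ∩ convexHull ℝ ↑(stairFacet d π k) ⊆
      convexHull ℝ (↑(stairFacet d π i) ∩ ↑(stairFacet d π k)) := by
  have key {i k : Fin d} (hik : i < k) :
      convexHull ℝ (stairFacet d π i : Set (PrismSpace d)) ∩ convexHull ℝ ↑(stairFacet d π k) ⊆
        convexHull ℝ (↑(stairFacet d π i) ∩ ↑(stairFacet d π k)) := by
    rw [stairFacet_eq_stairSimplex, stairFacet_eq_stairSimplex]
    refine convexHull_stairSimplex_inter_subset fun j hj => ?_
    obtain ⟨l, hl, rfl⟩ := mem_image.1 hj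
    exact mem_erase.2 ⟨π.injective.ne ((mem_Iic.1 hl).trans_lt hik).ne,
      mem_image_of_mem π (mem_Iic.2 ((mem_Iic.1 hl).trans hik.le))⟩
  rcases lt_trichotomy i k with hik | rfl | hki
  · exact key hik
  · simp
  · intro x hx
    rw [Set.inter_comm]
    exact key hki hx.symm

lemma affineIndependent_stairFacet (i : Fin d) :
    AffineIndependent ℝ ((↑) : stairFacet d π i → PrismSpace d) := by
  rw [stairFacet_eq_stairSimplex]
  exact affineIndependent_stairSimplex

lemma stairFacet_subset_prismVerts_univ (i : Fin d) :
    stairFacet d π i ⊆ prismVerts univ univ := by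
  rw [stairFacet_eq_stairSimplex]
  exact prismVerts_subset_prismVerts.2 ⟨subset_univ _, subset_univ _⟩

noncomputable def stairComplex : Geometry.SimplicialComplex ℝ (PrismSpace d) where
  faces := stairFaces d π
  indep := fun ⟨_, i, hs⟩ => (affineIndependent_stairFacet π i).mono (coe_subset.2 hs)
  isRelLowerSet_faces := fun _ ⟨hs, i, hsi⟩ => ⟨hs, fun _ ht hne => ⟨hne, i, ht.trans hsi⟩⟩
  inter_subset_convexHull := fun ⟨_, i, hs⟩ ⟨_, k, ht⟩ =>
    convexHull_inter_subset_of_subset (affineIndependent_stairFacet π i)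
      (affineIndependent_stairFacet π k) (convexHull_stairFacet_inter_subset π i k) hs ht

lemma space_stairComplex : (stairComplex π).space = prism d := by
  refine subset_antisymm (Set.iUnion₂_subset fun s ⟨_, i, hs⟩ => ?_) fun x hx => ?_
  · rw [prism_eq_convexHull_prismVerts]
    exact convexHull_mono (coe_subset.2 (hs.trans (stairFacet_subset_prismVerts_univ π i)))
  · obtain ⟨i, hi⟩ := exists_mem_convexHull_stairFacet π hx
    have hne : (stairFacet d π i).Nonempty := ⟨ptA d (π i), by
      rw [stairFacet_eq_stairSimplex]; simp [stairSimplex]⟩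
    exact (stairComplex π).mem_space_iff.2 ⟨_, ⟨hne, i, Subset.rfl⟩, hi⟩

end Staircase

section Uniqueness

variable {K : Geometry.SimplicialComplex ℝ (PrismSpace d)}

/-- The centroid `axisPoint d #A` of the face `prismVerts A Aᶜ` of `stairSimplex A m` lies in
`stairSimplex A' m'`, hence so does that whole face. -/
lemma subset_of_stairSimplex_mem_faces {A A' : Finset (Fin d)} {m m' : Fin d} (hm : m ∈ A)
    (hm' : m' ∈ A') (hcard : #A' = #A + 1) (hF : stairSimplex A m ∈ K.faces)
    (hF' : stairSimplex A' m' ∈ K.faces) : A ⊆ A' ∧ m' ∉ A := by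
  have hd : (0 : ℝ) < d := Nat.cast_pos.2 m.pos
  set C := prismVerts A Aᶜ
  have hC : C ∈ K.faces :=
    K.down_closed hF (prismVerts_subset_prismVerts.2 ⟨Subset.rfl, subset_union_left⟩)
      ⟨ptA d m, by simp [C, hm]⟩
  have hw1 : ∑ _p ∈ C, (d : ℝ)⁻¹ = 1 := by
    rw [sum_prismVerts, sum_const, sum_const, ← add_nsmul, card_add_card_compl]
    simp [hd.ne']
  have hcenter : ∑ p ∈ C, (d : ℝ)⁻¹ • p ∈ convexHull ℝ (↑C ∩ ↑(stairSimplex A' m')) := by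
    refine K.inter_subset_convexHull hC hF' ⟨(convex_convexHull ℝ _).sum_mem
      (fun _ _ => by positivity) hw1 fun p hp => subset_convexHull ℝ _ hp, ?_⟩
    rw [sum_smul_prismVerts_compl m.pos.ne']
    exact axisPoint_mem_convexHull_stairSimplex hm' (by rw [hcard]; push_cast; linarith)
      (by rw [hcard]; push_cast; linarith)
  rw [← coe_inter] at hcenter
  obtain ⟨hAA', hcompl⟩ := prismVerts_subset_prismVerts.1
    (((K.indep hC).subset_of_sum_smul_mem_convexHull inter_subset_left
      (fun _ _ => inv_ne_zero hd.ne') hw1 hcenter).trans inter_subset_right)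
  refine ⟨hAA', fun hm'A => ?_⟩
  have hA'A : A' ⊆ A := fun j hj => by
    by_contra hjA
    have := hcompl (mem_compl.2 hjA)
    simp only [mem_union, mem_compl, mem_singleton] at this
    rcases this with h | rfl
    exacts [h hj, hjA hm'A]
  have := card_le_card hA'A
  omega

lemma exists_stairSimplex_mem_faces (hsp : K.space = prism d)
    (hver : ∀ s ∈ K.faces, (s : Set (PrismSpace d)) ⊆ Set.range (ptA d) ∪ Set.range (ptB d))
    (i : Fin d) : ∃ A m, m ∈ A ∧ #A = i + 1 ∧ stairSimplex A m ∈ K.faces := by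
  have hc : axisPoint d (i + 2⁻¹) ∈ K.space := by
    rw [hsp, prism_eq_convexHull_prismVerts]
    refine convexHull_mono (coe_subset.2 (prismVerts_subset_prismVerts.2
      ⟨subset_univ _, subset_univ _⟩)) (axisPoint_mem_convexHull_stairSimplex
        (A := Iic i) (mem_Iic.2 le_rfl) ?_ ?_) <;>
    · rw [Fin.card_Iic]; push_cast; linarith
  obtain ⟨s, hs, hcs⟩ := K.mem_space_iff.1 hc
  obtain ⟨A, B, rfl⟩ := exists_eq_prismVerts (hver s hs)
  obtain ⟨m, hm, hcard, rfl⟩ := eq_stairSimplex_of_axisPoint_mem (K.indep hs) hcs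
  exact ⟨A, m, hm, hcard, hs⟩

lemma exists_perm_forall_stairFacet_mem_faces (hsp : K.space = prism d)
    (hver : ∀ s ∈ K.faces, (s : Set (PrismSpace d)) ⊆ Set.range (ptA d) ∪ Set.range (ptB d)) :
    ∃ π : Equiv.Perm (Fin d), ∀ i, stairFacet d π i ∈ K.faces := by
  choose A m hm hcard hface using exists_stairSimplex_mem_faces hsp hver
  cases d with
  | zero => exact ⟨1, fun i => i.elim0⟩
  | succ n =>
  have hstep (i : Fin n) : A i.castSucc ⊆ A i.succ ∧ m i.succ ∉ A i.castSucc :=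
    subset_of_stairSimplex_mem_faces (hm _) (hm _) (by simp [hcard]) (hface _) (hface _)
  have hmono : Monotone A := Fin.monotone_iff_le_succ.2 fun i => (hstep i).1
  have hinj : Function.Injective m := .of_lt_imp_ne fun i k hik heq => by
    obtain ⟨k, rfl⟩ := Fin.exists_succ_eq.2 (Fin.ne_zero_of_lt hik)
    exact (hstep k).2 (heq ▸ hmono (Fin.le_castSucc_iff.2 hik) (hm i))
  set π := Equiv.ofBijective m hinj.bijective_of_finite
  have hA (i : Fin (n + 1)) : (Iic i).image π = A i :=
    eq_of_subset_of_card_le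
      (image_subset_iff.2 fun j hj => hmono (mem_Iic.1 hj) (hm j))
      (by rw [hcard, card_image_of_injective _ π.injective, Fin.card_Iic])
  refine ⟨π, fun i => ?_⟩
  rw [stairFacet_eq_stairSimplex, hA]
  exact hface i

lemma faces_eq_stairFaces {π : Equiv.Perm (Fin d)} (hsp : K.space = prism d)
    (hπ : ∀ i, stairFacet d π i ∈ K.faces) : K.faces = stairFaces d π := by
  ext s
  refine ⟨fun hs => ⟨K.nonempty_of_mem_faces hs, ?_⟩,
    fun ⟨hne, i, hsi⟩ => K.down_closed (hπ i) hsi hne⟩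
  have hcard : (#s : ℝ) ≠ 0 := Nat.cast_ne_zero.2 (K.nonempty_of_mem_faces hs).card_pos.ne'
  have hw1 : ∑ _p ∈ s, (#s : ℝ)⁻¹ = 1 := by simp [hcard]
  have hcs : ∑ p ∈ s, (#s : ℝ)⁻¹ • p ∈ convexHull ℝ (s : Set (PrismSpace d)) :=
    (convex_convexHull ℝ _).sum_mem (fun _ _ => by positivity) hw1
      fun p hp => subset_convexHull ℝ _ hp
  obtain ⟨i, hi⟩ := exists_mem_convexHull_stairFacet π
    (hsp ▸ K.mem_space_iff.2 ⟨s, hs, hcs⟩)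
  have := K.inter_subset_convexHull hs (hπ i) ⟨hcs, hi⟩
  rw [← coe_inter] at this
  exact ⟨i, ((K.indep hs).subset_of_sum_smul_mem_convexHull inter_subset_left
    (fun _ _ => inv_ne_zero hcard) hw1 this).trans inter_subset_right⟩

end Uniqueness

theorem prism_subdivision_unique_general (d : ℕ) :
    (∃ K : Geometry.SimplicialComplex ℝ (PrismSpace d),
      K.space = prism d ∧
      (∀ s ∈ K.faces, (s : Set (PrismSpace d)) ⊆ Set.range (ptA d) ∪ Set.range (ptB d)) ∧
      K.faces = stairFaces d 1) ∧
    (∀ K : Geometry.SimplicialComplex ℝ (PrismSpace d),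
      K.space = prism d →
      (∀ s ∈ K.faces, (s : Set (PrismSpace d)) ⊆ Set.range (ptA d) ∪ Set.range (ptB d)) →
      ∃ π : Equiv.Perm (Fin d), K.faces = stairFaces d π) := by
  refine ⟨⟨stairComplex 1, space_stairComplex 1, fun s ⟨_, i, hs⟩ => ?_, rfl⟩,
    fun K hsp hver => ?_⟩
  · rw [← coe_prismVerts_univ]
    exact coe_subset.2 (hs.trans (stairFacet_subset_prismVerts_univ 1 i))
  · obtain ⟨π, hπ⟩ := exists_perm_forall_stairFacet_mem_faces hsp hver
    exact ⟨π, faces_eq_stairFaces hsp hπ⟩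

/-- For `d ≥ 1`, the staircase triangulation is a simplicial subdivision of the prism
`C_d = σ × [0,1]` using only the `2d` vertices of `C_d`, and it is the unique such subdivision
up to isomorphism (i.e. up to relabelling the vertices of `σ` by a permutation). -/
theorem prism_subdivision_unique (d : ℕ) (hd : 1 ≤ d) :
    (∃ K : Geometry.SimplicialComplex ℝ (PrismSpace d),
      K.space = prism d ∧
      (∀ s ∈ K.faces, (s : Set (PrismSpace d)) ⊆ Set.range (ptA d) ∪ Set.range (ptB d)) ∧
      K.faces = stairFaces d 1) ∧
    (∀ K : Geometry.SimplicialComplex ℝ (PrismSpace d),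
      K.space = prism d →
      (∀ s ∈ K.faces, (s : Set (PrismSpace d)) ⊆ Set.range (ptA d) ∪ Set.range (ptB d)) →
      ∃ π : Equiv.Perm (Fin d), K.faces = stairFaces d π) :=
  prism_subdivision_unique_general d
end

section
/- Let P be a d-polytope and x a point of P, with C the smallest face of P containing x, and let Ast_P(x) be the set of faces of P not containing C. Then the collection {x ∗ D : D ∈ Ast_P(x)} (cones with apex x) is a polytopal subdivision of P. -/
/-- A collection `𝒞` of sets is a polytopal subdivision of `P` if every member is a polytope
(the convex hull of a finite set), their union is `P`, and any two members meet in a common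
(exposed) face of each. -/
def IsPolytopalSubdivision {E : Type*} [NormedAddCommGroup E] [NormedSpace ℝ E]
    (P : Set E) (𝒞 : Set (Set E)) : Prop :=
  (∀ Q ∈ 𝒞, ∃ s : Finset E, Q = convexHull ℝ (s : Set E)) ∧
  ⋃₀ 𝒞 = P ∧
  (∀ Q ∈ 𝒞, ∀ R ∈ 𝒞, IsExposed ℝ Q (Q ∩ R) ∧ IsExposed ℝ R (Q ∩ R))

/-!
A face of `P = conv s` is the convex hull of the points of `s` on it, so every cone `x ∗ D` is a
polytope. For `y ∈ P`, follow the ray from `x` through `y` to its last point `z` in `P`. The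
tangent cone of `P` at `z` is finitely generated, hence closed, and does not contain `z - x`;
Farkas' lemma then gives a face `D ∋ z` missing `x`, and `y ∈ [x, z] ⊆ x ∗ D`. Finally, if
`Dᵢ = {p ∈ P | lᵢ p = Mᵢ}` with `lᵢ ≤ Mᵢ` on `P` and `αᵢ = Mᵢ - lᵢ x > 0`, the functional
`g = α₁ l₂ - α₂ l₁` satisfies `g ≤ g x` on `x ∗ D₁` and `g ≥ g x` on `x ∗ D₂`, and `g = g x` at a
point of `D₁` only if it lies in `D₂`; hence `(x ∗ D₁) ∩ (x ∗ D₂)` is the face of `x ∗ D₁` exposed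
by `g` (and symmetrically by `-g` in `x ∗ D₂`).
-/

open Set Topology

namespace PointedCone

variable {E : Type*} [NormedAddCommGroup E] [NormedSpace ℝ E]

lemma mem_hull_finset {s : Finset E} {p : E} :
    p ∈ hull ℝ (s : Set E) ↔ ∃ μ : E → ℝ, (∀ a ∈ s, 0 ≤ μ a) ∧ ∑ a ∈ s, μ a • a = p := by
  classical
  rw [Submodule.mem_span_finset']
  constructor
  · rintro ⟨f, rfl⟩
    refine ⟨fun a => if h : a ∈ s then f ⟨a, h⟩ else 0, fun a ha => by simp [ha, (f _).2], ?_⟩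
    rw [← Finset.sum_coe_sort s]
    exact Finset.sum_congr rfl fun a _ => by simp [Nonneg.coe_smul]
  · rintro ⟨μ, hμ, rfl⟩
    refine ⟨fun a => ⟨μ a, hμ a a.2⟩, ?_⟩
    rw [← Finset.sum_coe_sort s]
    exact Finset.sum_congr rfl fun a _ => (Nonneg.coe_smul _ _).symm

lemma isClosed_hull_of_linearIndepOn {s : Finset E} (hs : LinearIndepOn ℝ id (s : Set E)) :
    IsClosed (hull ℝ (s : Set E) : Set E) := by
  let L := Fintype.linearCombination ℝ (Subtype.val : s → E)
  have hL : LinearMap.ker L = ⊥ :=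
    LinearMap.ker_eq_bot.2 (linearIndependent_iff_injective_fintypeLinearCombination.1 hs)
  have himage : (hull ℝ (s : Set E) : Set E) = L '' {μ | ∀ a, 0 ≤ μ a} := by
    ext p
    simp only [SetLike.mem_coe, Submodule.mem_span_finset', mem_image, mem_ofPred_eq, L,
      Fintype.linearCombination_apply]
    constructor
    · rintro ⟨f, rfl⟩
      exact ⟨fun a => f a, fun a => (f a).2, Finset.sum_congr rfl fun a _ => Nonneg.coe_smul _ _⟩
    · rintro ⟨μ, hμ, rfl⟩
      exact ⟨fun a => ⟨μ a, hμ a⟩, Finset.sum_congr rfl fun a _ => (Nonneg.coe_smul _ _).symm⟩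
  rw [himage]
  refine (LinearMap.isClosedEmbedding_of_injective hL).isClosedMap _ ?_
  simp only [ofPred_forall]
  exact isClosed_iInter fun a => isClosed_le continuous_const (continuous_apply a)

lemma exists_mem_hull_erase_of_not_linearIndepOn [DecidableEq E] {s : Finset E}
    (hs : ¬ LinearIndepOn ℝ id (s : Set E)) {p : E} (hp : p ∈ hull ℝ (s : Set E)) :
    ∃ b ∈ s, p ∈ hull ℝ (s.erase b : Set E) := by
  obtain ⟨μ, hμ, rfl⟩ := mem_hull_finset.1 hp
  obtain ⟨g, hg, a₀, ha₀, hga₀⟩ : ∃ g : E → ℝ, ∑ a ∈ s, g a • a = 0 ∧ ∃ a ∈ s, 0 < g a := by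
    obtain ⟨g, hg, a, ha, hga⟩ := not_linearIndepOn_finset_iff.1 hs
    rcases hga.lt_or_gt with hlt | hgt
    · exact ⟨-g, by simpa [Finset.sum_neg_distrib] using hg, a, ha, neg_pos.2 hlt⟩
    · exact ⟨g, by simpa using hg, a, ha, hgt⟩
  -- Subtract the largest multiple `t • g` of the relation keeping all coefficients nonnegative;
  -- the coefficient at `b` then vanishes.
  obtain ⟨b, hb, hmin⟩ := Finset.exists_min_image (s.filter (0 < g ·)) (fun a => μ a / g a)
    ⟨a₀, Finset.mem_filter.2 ⟨ha₀, hga₀⟩⟩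
  obtain ⟨hbs, hgb⟩ := Finset.mem_filter.1 hb
  set t := μ b / g b
  have ht : 0 ≤ t := div_nonneg (hμ b hbs) hgb.le
  refine ⟨b, hbs, mem_hull_finset.2 ⟨fun a => μ a - t * g a, fun a ha => ?_, ?_⟩⟩
  · have has := Finset.mem_of_mem_erase ha
    rcases lt_or_ge 0 (g a) with hga | hga
    · have := hmin a (Finset.mem_filter.2 ⟨has, hga⟩)
      rw [le_div_iff₀ hga] at this
      linarith
    · nlinarith [hμ a has]
  · rw [Finset.sum_erase s (by simp [t, div_mul_cancel₀ _ hgb.ne'])]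
    simp only [sub_smul, mul_smul, Finset.sum_sub_distrib, ← Finset.smul_sum, hg, smul_zero,
      sub_zero]

/-- Conic Carathéodory: a cone over dependent generators is the union of the cones over the
generator sets with one element removed. -/
theorem isClosed_hull_finset (s : Finset E) : IsClosed (hull ℝ (s : Set E) : Set E) := by
  classical
  induction s using Finset.strongInduction with
  | H s ih =>
    by_cases hs : LinearIndepOn ℝ id (s : Set E)
    · exact isClosed_hull_of_linearIndepOn hs
    · have : (hull ℝ (s : Set E) : Set E) = ⋃ b ∈ s, (hull ℝ (s.erase b : Set E) : Set E) := by
        refine Subset.antisymm (fun p hp => ?_) (iUnion₂_subset fun b _ => ?_)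
        · obtain ⟨b, hb, hpb⟩ := exists_mem_hull_erase_of_not_linearIndepOn hs hp
          exact mem_iUnion₂.2 ⟨b, hb, hpb⟩
        · exact Submodule.span_mono (Finset.coe_subset.2 (s.erase_subset b))
      rw [this]
      exact isClosed_biUnion_finset fun b hb => ih _ (Finset.erase_ssubset hb)

end PointedCone

section Polytope

variable {E : Type*} [NormedAddCommGroup E] [NormedSpace ℝ E]

lemma ContinuousLinearMap.le_of_mem_convexHull (l : E →L[ℝ] ℝ) {A : Set E} {c : ℝ}
    (hA : ∀ a ∈ A, l a ≤ c) {p : E} (hp : p ∈ convexHull ℝ A) : l p ≤ c :=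
  convexHull_min hA (convex_halfSpace_le l.toLinearMap.isLinear c) hp

theorem mem_convexHull_sep_of_forall_le {l : E →L[ℝ] ℝ} {A : Set E} {c : ℝ}
    (hA : ∀ a ∈ A, l a ≤ c) {p : E} (hp : p ∈ convexHull ℝ A) (hpc : l p = c) :
    p ∈ convexHull ℝ {a ∈ A | l a = c} := by
  set F := convexHull ℝ {a ∈ A | l a = c}
  have hF : F ⊆ {q | l q = c} :=
    convexHull_min (fun a ha => ha.2) (convex_hyperplane l.toLinearMap.isLinear c)
  -- An open segment with an endpoint strictly below level `c` lies strictly below it.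
  have hconv : Convex ℝ ({q | l q < c} ∪ F) := by
    refine convex_iff_openSegment_subset.2 fun q hq r hr => ?_
    rintro _ ⟨α, β, hα, hβ, hαβ, rfl⟩
    have hc : α * c + β * c = c := by rw [← add_mul, hαβ, one_mul]
    rcases hq with hq | hq
    · left
      have hr' : l r ≤ c := hr.elim (fun h => le_of_lt h) fun h => (hF h).le
      simp only [mem_ofPred_eq, map_add, map_smul, smul_eq_mul] at hq ⊢
      linarith [mul_pos hα (sub_pos.2 hq), mul_nonneg hβ.le (sub_nonneg.2 hr')]
    rcases hr with hr | hr
    · left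
      have hq' : l q = c := hF hq
      simp only [mem_ofPred_eq, map_add, map_smul, smul_eq_mul, hq'] at hr ⊢
      linarith [mul_pos hβ (sub_pos.2 hr)]
    · exact Or.inr ((convex_convexHull ℝ _).openSegment_subset hq hr ⟨α, β, hα, hβ, hαβ, rfl⟩)
  have hsub : convexHull ℝ A ⊆ {q | l q < c} ∪ F :=
    convexHull_min (fun a ha => (hA a ha).lt_or_eq.imp id fun h => subset_convexHull ℝ _ ⟨ha, h⟩)
      hconv
  exact (hsub hp).resolve_left hpc.not_lt

theorem IsExposed.exists_eq_sep {A D : Set E} (hD : IsExposed ℝ A D) :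
    ∃ (l : E →L[ℝ] ℝ) (M : ℝ), (∀ p ∈ A, l p ≤ M) ∧ D = {p ∈ A | l p = M} := by
  rcases D.eq_empty_or_nonempty with rfl | hne
  · exact ⟨0, 1, fun _ _ => zero_le_one, by simp⟩
  obtain ⟨l, rfl⟩ := hD hne
  obtain ⟨d, hdA, hd⟩ := hne
  exact ⟨l, l d, hd, Subset.antisymm (fun p hp => ⟨hp.1, le_antisymm (hd p hp.1) (hp.2 d hdA)⟩)
    fun p hp => ⟨hp.1, fun y hy => hp.2 ▸ hd y hy⟩⟩

theorem IsExposed.exists_finset_eq_convexHull {s : Finset E} {D : Set E}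
    (hD : IsExposed ℝ (convexHull ℝ (s : Set E)) D) :
    ∃ t : Finset E, D = convexHull ℝ (t : Set E) := by
  classical
  obtain ⟨l, M, hle, hDeq⟩ := hD.exists_eq_sep
  refine ⟨s.filter (l · = M), Subset.antisymm (fun p hp => ?_) ?_⟩
  · rw [hDeq] at hp
    rw [Finset.coe_filter]
    exact mem_convexHull_sep_of_forall_le (fun a ha => hle a (subset_convexHull ℝ _ ha)) hp.1 hp.2
  · refine convexHull_min (fun a ha => ?_) (hD.convex (convex_convexHull ℝ _))
    obtain ⟨has, hla⟩ := Finset.mem_filter.1 ha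
    exact hDeq ▸ ⟨subset_convexHull ℝ _ has, hla⟩

theorem Convex.exists_pos_add_smul_mem_of_mem_hull {P : Set E} (hP : Convex ℝ P) {z v : E}
    (hz : z ∈ P) (hv : v ∈ PointedCone.hull ℝ ((· - z) '' P)) :
    ∃ ε : ℝ, 0 < ε ∧ z + ε • v ∈ P := by
  induction hv using Submodule.span_induction with
  | mem v hv =>
    obtain ⟨p, hp, rfl⟩ := hv
    exact ⟨1, one_pos, by simpa using hp⟩
  | zero => exact ⟨1, one_pos, by simpa using hz⟩
  | add v w _ _ hv hw =>
    obtain ⟨ε, hε, hv⟩ := hv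
    obtain ⟨δ, hδ, hw⟩ := hw
    have hsum : δ / (ε + δ) + ε / (ε + δ) = 1 := by field_simp; ring
    refine ⟨ε * δ / (ε + δ), by positivity, ?_⟩
    convert hP hv hw (by positivity) (by positivity) hsum using 1
    linear_combination (norm := module) -hsum • z
  | smul c v _ hv =>
    obtain ⟨ε, hε, hv⟩ := hv
    rcases c.2.eq_or_lt with hc | hc
    · exact ⟨1, one_pos, by simpa [← Nonneg.coe_smul, ← hc] using hz⟩
    · refine ⟨ε / (c : ℝ), by positivity, ?_⟩
      rwa [← Nonneg.coe_smul, smul_smul, div_mul_cancel₀ _ hc.ne']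

theorem exists_forall_le_lt_of_forall_add_smul_notMem (s : Finset E) {x z : E}
    (hz : z ∈ convexHull ℝ (s : Set E))
    (hout : ∀ ε : ℝ, 0 < ε → z + ε • (z - x) ∉ convexHull ℝ (s : Set E)) :
    ∃ l : E →L[ℝ] ℝ, (∀ p ∈ convexHull ℝ (s : Set E), l p ≤ l z) ∧ l x < l z := by
  classical
  let K : ProperCone ℝ E :=
    ⟨PointedCone.hull ℝ (s.image (· - z) : Set E), PointedCone.isClosed_hull_finset _⟩
  have hK : z - x ∉ K := fun h => by
    have h' : z - x ∈ PointedCone.hull ℝ ((· - z) '' convexHull ℝ (s : Set E)) := by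
      refine Submodule.span_mono ?_ h
      rw [Finset.coe_image]
      exact image_mono (subset_convexHull ℝ _)
    obtain ⟨ε, hε, hmem⟩ := (convex_convexHull ℝ _).exists_pos_add_smul_mem_of_mem_hull hz h'
    exact hout ε hε hmem
  obtain ⟨f, hf, hfzx⟩ := K.hyperplane_separation_point hK
  refine ⟨-f, fun p hp => (-f).le_of_mem_convexHull (fun a ha => ?_) hp, ?_⟩
  · have := hf (a - z) (Submodule.subset_span (Finset.mem_coe.2 (Finset.mem_image_of_mem _ ha)))
    simp only [map_sub, neg_apply] at this ⊢
    linarith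
  · simp only [map_sub, neg_apply] at hfzx ⊢
    linarith

theorem IsCompact.exists_mem_segment_forall_add_smul_notMem {K : Set E} (hK : IsCompact K)
    {x y : E} (hy : y ∈ K) (hyx : y ≠ x) :
    ∃ z ∈ K, y ∈ segment ℝ x z ∧ ∀ ε : ℝ, 0 < ε → z + ε • (z - x) ∉ K := by
  let ray : ℝ → E := fun t => x + t • (y - x)
  have hray : IsClosedEmbedding ray :=
    (Homeomorph.addLeft x).isClosedEmbedding.comp (isClosedEmbedding_smul_left (sub_ne_zero.2 hyx))
  have hT : IsCompact (ray ⁻¹' K ∩ Ici 1) := (hray.isCompact_preimage hK).inter_right isClosed_Ici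
  obtain ⟨t, ⟨htK, ht1⟩, htmax⟩ :=
    hT.exists_isGreatest ⟨1, by simpa [ray] using hy, mem_Ici.2 le_rfl⟩
  have ht0 : 0 < t := one_pos.trans_le ht1
  refine ⟨ray t, htK, ⟨1 - t⁻¹, t⁻¹, sub_nonneg.2 (inv_le_one_of_one_le₀ ht1), by positivity,
    by ring, ?_⟩, fun ε hε hmem => ?_⟩
  · simp only [ray, smul_add, smul_smul, inv_mul_cancel₀ ht0.ne']
    module
  · have : t + ε * t ∈ ray ⁻¹' K ∩ Ici 1 := by
      refine ⟨?_, mem_Ici.2 (le_add_of_le_of_nonneg ht1 (mul_nonneg hε.le ht0.le))⟩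
      show ray (t + ε * t) ∈ K
      convert hmem using 1
      simp only [ray]
      module
    nlinarith [htmax this]

theorem exists_isExposed_notMem_mem_convexHull_insert (s : Finset E) (x : E) {y : E}
    (hy : y ∈ convexHull ℝ (s : Set E)) :
    ∃ D, IsExposed ℝ (convexHull ℝ (s : Set E)) D ∧ x ∉ D ∧ y ∈ convexHull ℝ (insert x D) := by
  rcases eq_or_ne y x with rfl | hyx
  · exact ⟨∅, isExposed_empty, notMem_empty y, subset_convexHull ℝ _ (mem_insert y ∅)⟩
  obtain ⟨z, hz, hyz, hout⟩ :=
    (s.finite_toSet.isCompact_convexHull (𝕜 := ℝ)).exists_mem_segment_forall_add_smul_notMem hy hyx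
  obtain ⟨l, hl, hlx⟩ := exists_forall_le_lt_of_forall_add_smul_notMem s hz hout
  exact ⟨l.toExposed (convexHull ℝ (s : Set E)), ContinuousLinearMap.toExposed.isExposed,
    fun h => (hlx.trans_le (h.2 z hz)).false,
    segment_subset_convexHull (mem_insert x _)
      (mem_insert_of_mem x (show z ∈ l.toExposed _ from ⟨hz, hl⟩)) hyz⟩

theorem convexHull_insert_inter_eq_toExposed {P : Set E} {x : E} {l₁ l₂ : E →L[ℝ] ℝ}
    {M₁ M₂ : ℝ} (h₁ : ∀ p ∈ P, l₁ p ≤ M₁) (h₂ : ∀ p ∈ P, l₂ p ≤ M₂) (hx₁ : l₁ x < M₁)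
    (hx₂ : l₂ x < M₂) :
    convexHull ℝ (insert x {p ∈ P | l₁ p = M₁}) ∩ convexHull ℝ (insert x {p ∈ P | l₂ p = M₂}) =
      ((M₁ - l₁ x) • l₂ - (M₂ - l₂ x) • l₁).toExposed
        (convexHull ℝ (insert x {p ∈ P | l₁ p = M₁})) := by
  set g := (M₁ - l₁ x) • l₂ - (M₂ - l₂ x) • l₁
  set D₁ := {p ∈ P | l₁ p = M₁}
  set D₂ := {p ∈ P | l₂ p = M₂}
  have hg : ∀ p, g p - g x = (M₁ - l₁ x) * (l₂ p - M₂) - (M₂ - l₂ x) * (l₁ p - M₁) := by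
    intro p
    simp only [g, sub_apply, smul_apply, smul_eq_mul]
    ring
  have hle : ∀ a ∈ insert x D₁, g a ≤ g x := by
    rintro a (rfl | ⟨haP, ha⟩)
    · exact le_rfl
    · nlinarith [hg a, h₂ a haP]
  have hge : ∀ a ∈ insert x D₂, (-g) a ≤ -g x := by
    rintro a (rfl | ⟨haP, ha⟩)
    · exact le_rfl
    · simp only [neg_apply]
      nlinarith [hg a, h₁ a haP]
  have hcontact : {a ∈ insert x D₁ | g a = g x} ⊆ insert x D₂ := by
    rintro a ⟨rfl | ⟨haP, ha⟩, hga⟩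
    · exact mem_insert a _
    · refine mem_insert_of_mem x ⟨haP, ?_⟩
      have := hg a
      rw [hga, sub_self, ha, sub_self, mul_zero, sub_zero, zero_eq_mul] at this
      exact sub_eq_zero.1 (this.resolve_left (sub_pos.2 hx₁).ne')
  have hxQ : x ∈ convexHull ℝ (insert x D₁) := subset_convexHull ℝ _ (mem_insert x _)
  ext p
  constructor
  · rintro ⟨hp₁, hp₂⟩
    have hgp : g x ≤ g p := by simpa using (-g).le_of_mem_convexHull hge hp₂
    exact ⟨hp₁, fun y hy => (g.le_of_mem_convexHull hle hy).trans hgp⟩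
  · rintro ⟨hp₁, hpmax⟩
    have hgp : g p = g x := le_antisymm (g.le_of_mem_convexHull hle hp₁) (hpmax x hxQ)
    exact ⟨hp₁, convexHull_mono hcontact (mem_convexHull_sep_of_forall_le hle hp₁ hgp)⟩

theorem isExposed_convexHull_insert_inter {P D₁ D₂ : Set E} {x : E} (hD₁ : IsExposed ℝ P D₁)
    (hD₂ : IsExposed ℝ P D₂) (hx : x ∈ P) (hx₁ : x ∉ D₁) (hx₂ : x ∉ D₂) :
    IsExposed ℝ (convexHull ℝ (insert x D₁))
      (convexHull ℝ (insert x D₁) ∩ convexHull ℝ (insert x D₂)) := by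
  obtain ⟨l₁, M₁, h₁, rfl⟩ := hD₁.exists_eq_sep
  obtain ⟨l₂, M₂, h₂, rfl⟩ := hD₂.exists_eq_sep
  rw [convexHull_insert_inter_eq_toExposed h₁ h₂ ((h₁ x hx).lt_of_ne fun h => hx₁ ⟨hx, h⟩)
    ((h₂ x hx).lt_of_ne fun h => hx₂ ⟨hx, h⟩)]
  exact ContinuousLinearMap.toExposed.isExposed

end Polytope

theorem antistar_polytopal_subdivision_general {E : Type*} [NormedAddCommGroup E] [NormedSpace ℝ E]
    (s : Finset E) (P : Set E) (hP : P = convexHull ℝ (s : Set E))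
    (x : E) (hx : x ∈ P)
    (C : Set E) (hxC : x ∈ C)
    (hmin : ∀ F : Set E, IsExposed ℝ P F → x ∈ F → C ⊆ F) :
    IsPolytopalSubdivision P
      {Q | ∃ D : Set E, IsExposed ℝ P D ∧ ¬ C ⊆ D ∧ Q = convexHull ℝ ({x} ∪ D)} := by
  classical
  subst hP
  have hCD : ∀ D, IsExposed ℝ (convexHull ℝ (s : Set E)) D → (¬ C ⊆ D ↔ x ∉ D) :=
    fun D hD => ⟨fun hC hxD => hC (hmin D hD hxD), fun hxD hC => hxD (hC hxC)⟩
  refine ⟨?_, Subset.antisymm (sUnion_subset ?_) fun y hy => ?_, ?_⟩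
  · rintro Q ⟨D, hD, -, rfl⟩
    obtain ⟨t, rfl⟩ := hD.exists_finset_eq_convexHull
    refine ⟨insert x t, ?_⟩
    rw [convexHull_convexHull_union_right, Finset.coe_insert, singleton_union]
  · rintro Q ⟨D, hD, -, rfl⟩
    exact convexHull_min (union_subset (singleton_subset_iff.2 hx) hD.subset)
      (convex_convexHull ℝ _)
  · obtain ⟨D, hD, hxD, hyD⟩ := exists_isExposed_notMem_mem_convexHull_insert s x hy
    exact ⟨_, ⟨D, hD, (hCD D hD).2 hxD, rfl⟩, by rwa [singleton_union]⟩
  · rintro Q ⟨D₁, hD₁, hC₁, rfl⟩ R ⟨D₂, hD₂, hC₂, rfl⟩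
    have hx₁ := (hCD D₁ hD₁).1 hC₁
    have hx₂ := (hCD D₂ hD₂).1 hC₂
    rw [singleton_union, singleton_union]
    refine ⟨isExposed_convexHull_insert_inter hD₁ hD₂ hx hx₁ hx₂, ?_⟩
    rw [inter_comm]
    exact isExposed_convexHull_insert_inter hD₂ hD₁ hx hx₂ hx₁

/-- The antistar lemma: if `P` is a polytope, `x ∈ P`, and `C` is the smallest face of `P`
containing `x`, then the cones `x ∗ D` over the faces `D` of `P` not containing `C` (the
antistar of `x` in `P`) form a polytopal subdivision of `P`. -/
theorem antistar_polytopal_subdivision {E : Type*} [NormedAddCommGroup E] [NormedSpace ℝ E]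
    (s : Finset E) (P : Set E) (hP : P = convexHull ℝ (s : Set E))
    (x : E) (hx : x ∈ P)
    (C : Set E) (hC : IsExposed ℝ P C) (hxC : x ∈ C)
    (hmin : ∀ F : Set E, IsExposed ℝ P F → x ∈ F → C ⊆ F) :
    IsPolytopalSubdivision P
      {Q | ∃ D : Set E, IsExposed ℝ P D ∧ ¬ C ⊆ D ∧ Q = convexHull ℝ ({x} ∪ D)} :=
  antistar_polytopal_subdivision_general s P hP x hx C hxC hmin
end

section
/- Under the hypotheses that α and β are simplices of dimensions i,j ≥ 1 whose relative interiors meet and whose union spans an affine space of dimension i+j, the intersection of the affine spans of α and β is a single point, and that point is the unique point in the intersection of their relative interiors. -/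
/-!
The relative interiors meet in a point `p` lying in both affine spans, so the span of the union
has direction `U ⊔ W`, where `U`, `W` are the directions of the two spans. A set of `n + 1` points
spans at most `n` dimensions, hence `dim U + dim W ≤ i + j = dim (U ⊔ W)`, and the dimension
formula gives `U ⊓ W = 0`. Two affine subspaces through `p` with independent directions meet only
in `p`, and the relative interiors lie inside the affine spans.
-/

open Module

theorem Submodule.inf_eq_bot_of_finrank_add_le {K V : Type*} [DivisionRing K] [AddCommGroup V]
    [Module K V] {s t : Submodule K V} [FiniteDimensional K s] [FiniteDimensional K t]
    (h : finrank K s + finrank K t ≤ finrank K ↥(s ⊔ t)) : s ⊓ t = ⊥ := by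
  have := finrank_sup_add_finrank_inf_eq s t
  exact Submodule.finrank_eq_zero.mp (by omega)

section AffineSpace

variable {k V P : Type*} [DivisionRing k] [AddCommGroup V] [Module k V] [AddTorsor V P]

theorem finrank_direction_affineSpan_finset_le (s : Finset P) :
    finrank k (affineSpan k (s : Set P)).direction ≤ s.card - 1 := by
  classical
  rw [direction_affineSpan]
  rcases s.eq_empty_or_nonempty with rfl | hs
  · rw [Finset.coe_empty, vectorSpan_empty, finrank_bot]
    exact Nat.zero_le _
  · have := finrank_vectorSpan_image_finset_le k id s (Nat.succ_pred_eq_of_pos hs.card_pos).symm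
    rwa [Finset.image_id] at this

theorem AffineSubspace.inter_eq_singleton_of_direction_inf_eq_bot {s₁ s₂ : AffineSubspace k P}
    {p : P} (h₁ : p ∈ s₁) (h₂ : p ∈ s₂) (hd : s₁.direction ⊓ s₂.direction = ⊥) :
    (s₁ : Set P) ∩ s₂ = {p} := by
  refine Set.eq_singleton_iff_unique_mem.mpr ⟨⟨h₁, h₂⟩, fun q ⟨hq₁, hq₂⟩ => ?_⟩
  have hqp : q -ᵥ p ∈ s₁.direction ⊓ s₂.direction :=
    ⟨vsub_mem_direction hq₁ h₁, vsub_mem_direction hq₂ h₂⟩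
  rwa [hd, Submodule.mem_bot, vsub_eq_zero_iff_eq] at hqp

theorem AffineSubspace.inter_eq_singleton_of_finrank_add_le {s₁ s₂ : AffineSubspace k P} {p : P}
    (h₁ : p ∈ s₁) (h₂ : p ∈ s₂) [FiniteDimensional k s₁.direction]
    [FiniteDimensional k s₂.direction]
    (hd : finrank k s₁.direction + finrank k s₂.direction ≤ finrank k (s₁ ⊔ s₂).direction) :
    (s₁ : Set P) ∩ s₂ = {p} := by
  have hsup : (s₁ ⊔ s₂).direction = s₁.direction ⊔ s₂.direction := by
    simp [direction_sup h₁ h₂]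
  rw [hsup] at hd
  exact inter_eq_singleton_of_direction_inf_eq_bot h₁ h₂ (Submodule.inf_eq_bot_of_finrank_add_le hd)

end AffineSpace

theorem affineSpan_inter_singleton_general {E : Type*} [NormedAddCommGroup E] [NormedSpace ℝ E]
    [DecidableEq E] (A B : Finset E)
    (hint : (intrinsicInterior ℝ (convexHull ℝ (A : Set E)) ∩
      intrinsicInterior ℝ (convexHull ℝ (B : Set E))).Nonempty)
    (hdim : Module.finrank ℝ (affineSpan ℝ ((A ∪ B : Finset E) : Set E)).direction =
      (A.card - 1) + (B.card - 1)) :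
    ∃ p : E,
      (affineSpan ℝ (A : Set E) : Set E) ∩ (affineSpan ℝ (B : Set E) : Set E) = {p} ∧
      intrinsicInterior ℝ (convexHull ℝ (A : Set E)) ∩
        intrinsicInterior ℝ (convexHull ℝ (B : Set E)) = {p} := by
  obtain ⟨p, hpA, hpB⟩ := hint
  have interior_subset_span (S : Finset E) :
      intrinsicInterior ℝ (convexHull ℝ (S : Set E)) ⊆ affineSpan ℝ (S : Set E) :=
    intrinsicInterior_subset.trans (convexHull_subset_affineSpan _)
  have := finiteDimensional_direction_affineSpan_of_finite ℝ A.finite_toSet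
  have := finiteDimensional_direction_affineSpan_of_finite ℝ B.finite_toSet
  have hspan := AffineSubspace.inter_eq_singleton_of_finrank_add_le
    (interior_subset_span A hpA) (interior_subset_span B hpB) <| by
      rw [← AffineSubspace.span_union, ← Finset.coe_union, hdim]
      exact add_le_add (finrank_direction_affineSpan_finset_le A)
        (finrank_direction_affineSpan_finset_le B)
  refine ⟨p, hspan, Set.Subset.antisymm ?_ (Set.singleton_subset_iff.mpr ⟨hpA, hpB⟩)⟩
  exact hspan ▸ Set.inter_subset_inter (interior_subset_span A) (interior_subset_span B)

/-- If `α` and `β` are simplices (with affinely independent vertex sets `A`, `B`) of dimensions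
`i, j ≥ 1` whose relative interiors meet and whose union affinely spans a space of dimension
`i + j`, then the affine spans of `α` and `β` meet in a single point, which is the unique point
of the intersection of their relative interiors. -/
theorem affineSpan_inter_singleton {E : Type*} [NormedAddCommGroup E] [NormedSpace ℝ E]
    [DecidableEq E] (A B : Finset E)
    (hA : AffineIndependent ℝ ((↑) : A → E))
    (hB : AffineIndependent ℝ ((↑) : B → E))
    (hAcard : 2 ≤ A.card) (hBcard : 2 ≤ B.card)
    (hint : (intrinsicInterior ℝ (convexHull ℝ (A : Set E)) ∩
      intrinsicInterior ℝ (convexHull ℝ (B : Set E))).Nonempty)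
    (hdim : Module.finrank ℝ (affineSpan ℝ ((A ∪ B : Finset E) : Set E)).direction =
      (A.card - 1) + (B.card - 1)) :
    ∃ p : E,
      (affineSpan ℝ (A : Set E) : Set E) ∩ (affineSpan ℝ (B : Set E) : Set E) = {p} ∧
      intrinsicInterior ℝ (convexHull ℝ (A : Set E)) ∩
        intrinsicInterior ℝ (convexHull ℝ (B : Set E)) = {p} :=
  affineSpan_inter_singleton_general A B hint hdim
end

section
/- Let G be a group of simplicial automorphisms of a finite simplicial complex X whose action is pure. Then the fibres of the induced quotient simplicial map q : X → X/G are exactly the G-orbits on the simplices of X; that is, if q(α) = q(α') for faces α, α' of X, then α' = g(α) for some g ∈ G. -/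
open scoped Classical

/-- `u` and `v` lie in a common orbit of the group `G` of permutations of the vertices. -/
def SameOrbit {V : Type*} (G : Subgroup (Equiv.Perm V)) (u v : V) : Prop :=
  ∃ g ∈ G, g u = v

/-- The action of `G` on the simplicial complex `X` (given by its set of faces) is pure:
(a) distinct vertices in a common `G`-orbit are never adjacent; (b) for each `G`-orbit and each
face `α`, the stabiliser of `α` acts transitively on the orbit's vertices in the link of `α`. -/
def IsPureAction {V : Type*} [DecidableEq V] (G : Subgroup (Equiv.Perm V))
    (X : Set (Finset V)) : Prop :=
  (∀ u v : V, u ≠ v → SameOrbit G u v → ({u, v} : Finset V) ∉ X) ∧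
  (∀ α ∈ X, ∀ u v : V, SameOrbit G u v →
    u ∉ α → insert u α ∈ X → v ∉ α → insert v α ∈ X →
    ∃ g ∈ G, α.image g = α ∧ g u = v)

/-!
Induct on the number of vertices of `β` missing from `α`. If `v ∈ β \ α`, some `u ∈ α` has the
same orbit as `v`; condition (a) forces `u ∉ β`, so `u` and `v` both lie in the link of
`α ∩ β`, and condition (b) gives `g` fixing `α ∩ β` with `g u = v`. Then `g α` still has the
same orbit image as `β` but shares one more vertex with it.
-/

theorem Finset.sdiff_ssubset_sdiff_of_inter_subset {α : Type*} [DecidableEq α]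
    {s t u : Finset α} (h : s ∩ t ⊆ u) {v : α} (hvt : v ∈ t) (hvs : v ∉ s) (hvu : v ∈ u) :
    t \ u ⊂ t \ s := by
  refine (Finset.ssubset_iff_of_subset fun x hx ↦ ?_).2 ⟨v, by simp [hvt, hvs], by simp [hvu]⟩
  rw [Finset.mem_sdiff] at hx ⊢
  exact ⟨hx.1, fun hxs ↦ hx.2 (h (Finset.mem_inter.2 ⟨hxs, hx.1⟩))⟩

namespace SameOrbit

variable {V : Type*} {G : Subgroup (Equiv.Perm V)}

theorem equivalence (G : Subgroup (Equiv.Perm V)) : Equivalence (SameOrbit G) where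
  refl _ := ⟨1, G.one_mem, rfl⟩
  symm := by
    rintro x _ ⟨g, hg, rfl⟩
    exact ⟨g⁻¹, G.inv_mem hg, g.symm_apply_apply x⟩
  trans := by
    rintro _ _ _ ⟨g, hg, rfl⟩ ⟨h, hh, rfl⟩
    exact ⟨h * g, G.mul_mem hh hg, rfl⟩

theorem quot_mk_eq_iff {u v : V} :
    Quot.mk (SameOrbit G) u = Quot.mk (SameOrbit G) v ↔ SameOrbit G u v :=
  Quot.eq.trans (equivalence G).eqvGen_iff

theorem image_quot_mk_image [DecidableEq V] {g : Equiv.Perm V} (hg : g ∈ G) (s : Finset V) :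
    (s.image g).image (Quot.mk (SameOrbit G)) = s.image (Quot.mk (SameOrbit G)) := by
  rw [Finset.image_image]
  exact Finset.image_congr fun x _ ↦
    quot_mk_eq_iff.2 ⟨g⁻¹, G.inv_mem hg, g.symm_apply_apply x⟩

end SameOrbit

namespace IsPureAction

variable {V : Type*} [DecidableEq V] {G : Subgroup (Equiv.Perm V)} {X : Set (Finset V)}

theorem injOn_quot_mk (hdown : ∀ s ∈ X, ∀ t ⊆ s, t ∈ X) (hpure : IsPureAction G X)
    {α : Finset V} (hα : α ∈ X) : Set.InjOn (Quot.mk (SameOrbit G)) α := by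
  intro u hu v hv huv
  by_contra hne
  exact hpure.1 u v hne (SameOrbit.quot_mk_eq_iff.1 huv)
    (hdown α hα _ (Finset.insert_subset hu (Finset.singleton_subset_iff.2 hv)))

theorem card_eq_of_image_quot_mk_eq (hdown : ∀ s ∈ X, ∀ t ⊆ s, t ∈ X)
    (hpure : IsPureAction G X) {α β : Finset V} (hα : α ∈ X) (hβ : β ∈ X)
    (him : α.image (Quot.mk (SameOrbit G)) = β.image (Quot.mk (SameOrbit G))) :
    α.card = β.card := by
  rw [← Finset.card_image_of_injOn (hpure.injOn_quot_mk hdown hα), him,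
    Finset.card_image_of_injOn (hpure.injOn_quot_mk hdown hβ)]

theorem exists_inter_subset_image (hdown : ∀ s ∈ X, ∀ t ⊆ s, t ∈ X)
    (hpure : IsPureAction G X) {α β : Finset V} (hα : α ∈ X) (hβ : β ∈ X)
    (him : α.image (Quot.mk (SameOrbit G)) = β.image (Quot.mk (SameOrbit G)))
    {v : V} (hvβ : v ∈ β) (hvα : v ∉ α) :
    ∃ g ∈ G, α ∩ β ⊆ α.image g ∧ v ∈ α.image g := by
  obtain ⟨u, huα, huv⟩ : ∃ u ∈ α, Quot.mk (SameOrbit G) u = Quot.mk (SameOrbit G) v :=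
    Finset.mem_image.1 (him ▸ Finset.mem_image_of_mem _ hvβ)
  have huβ : u ∉ β := fun huβ ↦
    hvα (hpure.injOn_quot_mk hdown hβ huβ hvβ huv ▸ huα)
  obtain ⟨g, hg, hgfix, rfl⟩ := hpure.2 (α ∩ β) (hdown α hα _ Finset.inter_subset_left) u v
    (SameOrbit.quot_mk_eq_iff.1 huv) (fun h ↦ huβ (Finset.mem_inter.1 h).2)
    (hdown α hα _ (Finset.insert_subset huα Finset.inter_subset_left))
    (fun h ↦ hvα (Finset.mem_inter.1 h).1)
    (hdown β hβ _ (Finset.insert_subset hvβ Finset.inter_subset_right))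
  refine ⟨g, hg, ?_, Finset.mem_image_of_mem _ huα⟩
  rw [← hgfix]
  exact Finset.image_subset_image Finset.inter_subset_left

end IsPureAction

theorem pure_action_fibres_eq_orbits_general {V : Type*} [DecidableEq V]
    (G : Subgroup (Equiv.Perm V)) (X : Set (Finset V))
    (hdown : ∀ s ∈ X, ∀ t ⊆ s, t ∈ X)
    (hinv : ∀ g ∈ G, ∀ s ∈ X, s.image g ∈ X)
    (hpure : IsPureAction G X) :
    ∀ α ∈ X, ∀ β ∈ X,
      α.image (Quot.mk (SameOrbit G)) = β.image (Quot.mk (SameOrbit G)) →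
      ∃ g ∈ G, α.image g = β := by
  intro α hα β hβ him
  induction hn : (β \ α).card using Nat.strong_induction_on generalizing α with
  | _ n ih =>
    by_cases hsub : β ⊆ α
    · refine ⟨1, G.one_mem, ?_⟩
      rw [Equiv.Perm.coe_one, Finset.image_id]
      exact (Finset.eq_of_subset_of_card_le hsub
        (hpure.card_eq_of_image_quot_mk_eq hdown hα hβ him).le).symm
    obtain ⟨v, hvβ, hvα⟩ := Finset.not_subset.1 hsub
    obtain ⟨g, hg, hinter, hv⟩ := hpure.exists_inter_subset_image hdown hα hβ him hvβ hvα
    have hlt : β \ α.image g ⊂ β \ α :=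
      Finset.sdiff_ssubset_sdiff_of_inter_subset hinter hvβ hvα hv
    obtain ⟨h, hh, rfl⟩ := ih _ (hn ▸ Finset.card_lt_card hlt) (α.image g) (hinv g hg α hα)
      ((SameOrbit.image_quot_mk_image hg α).trans him) rfl
    exact ⟨h * g, G.mul_mem hh hg, by rw [Finset.image_image]; rfl⟩

/-- If a group `G` of simplicial automorphisms of a finite simplicial complex `X` acts purely,
then the fibres of the induced quotient simplicial map are exactly the `G`-orbits on faces:
two faces with the same image in the vertex quotient differ by an element of `G`. -/
theorem pure_action_fibres_eq_orbits {V : Type*} [Fintype V] [DecidableEq V]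
    (G : Subgroup (Equiv.Perm V)) (X : Set (Finset V))
    (hdown : ∀ s ∈ X, ∀ t ⊆ s, t ∈ X)
    (hinv : ∀ g ∈ G, ∀ s ∈ X, s.image g ∈ X)
    (hpure : IsPureAction G X) :
    ∀ α ∈ X, ∀ β ∈ X,
      α.image (Quot.mk (SameOrbit G)) = β.image (Quot.mk (SameOrbit G)) →
      ∃ g ∈ G, α.image g = β :=
  pure_action_fibres_eq_orbits_general G X hdown hinv hpure
end

section
/- If a group G of simplicial automorphisms of a finite simplicial complex X acts goodly, then the action is pure. -/
/-- The action of `G` on the simplicial complex `X` is good: for any two distinct vertices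
`u ≠ v` in a common `G`-orbit, `uv` is a non-edge and some `g ∈ G` maps `u` to `v` while fixing
every vertex in `lk(u) ∩ lk(v)`. -/
def IsGoodAction {V : Type*} [DecidableEq V] (G : Subgroup (Equiv.Perm V))
    (X : Set (Finset V)) : Prop :=
  ∀ u v : V, u ≠ v → SameOrbit G u v →
    ({u, v} : Finset V) ∉ X ∧
    ∃ g ∈ G, g u = v ∧
      ∀ w : V, ({u, w} : Finset V) ∈ X → ({v, w} : Finset V) ∈ X → g w = w

theorem Finset.pair_subset_insert {ι : Type*} [DecidableEq ι] {s : Finset ι} {w : ι}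
    (hw : w ∈ s) (u : ι) : ({u, w} : Finset ι) ⊆ insert u s :=
  Finset.insert_subset_insert u (Finset.singleton_subset_iff.mpr hw)

theorem IsGoodAction.exists_apply_eq_fixing_face {V : Type*} [DecidableEq V]
    {G : Subgroup (Equiv.Perm V)} {X : Set (Finset V)} (hgood : IsGoodAction G X)
    (hdown : ∀ s ∈ X, ∀ t ⊆ s, t ∈ X) {α : Finset V} {u v : V} (huv : u ≠ v)
    (hso : SameOrbit G u v) (hαu : insert u α ∈ X) (hαv : insert v α ∈ X) :
    ∃ g ∈ G, g u = v ∧ ∀ w ∈ α, g w = w := by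
  obtain ⟨-, g, hg, hgu, hfix⟩ := hgood u v huv hso
  exact ⟨g, hg, hgu, fun w hw =>
    hfix w (hdown _ hαu _ (α.pair_subset_insert hw u)) (hdown _ hαv _ (α.pair_subset_insert hw v))⟩

theorem Finset.image_eq_self_of_forall_apply_eq {ι : Type*} [DecidableEq ι] {s : Finset ι}
    {f : ι → ι} (hf : ∀ w ∈ s, f w = w) : s.image f = s :=
  (Finset.image_congr hf).trans Finset.image_id

theorem good_action_is_pure_general {V : Type*} [DecidableEq V]
    (G : Subgroup (Equiv.Perm V)) (X : Set (Finset V))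
    (hdown : ∀ s ∈ X, ∀ t ⊆ s, t ∈ X)
    (hgood : IsGoodAction G X) :
    IsPureAction G X := by
  refine ⟨fun u v huv hso => (hgood u v huv hso).1, ?_⟩
  intro α _ u v hso _ hαu _ hαv
  rcases eq_or_ne u v with rfl | huv
  · exact ⟨1, G.one_mem, by simp, rfl⟩
  · obtain ⟨g, hg, hgu, hfix⟩ := hgood.exists_apply_eq_fixing_face hdown huv hso hαu hαv
    exact ⟨g, hg, Finset.image_eq_self_of_forall_apply_eq hfix, hgu⟩

/-- A good action of a group of simplicial automorphisms on a finite simplicial complex is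
pure. -/
theorem good_action_is_pure {V : Type*} [Fintype V] [DecidableEq V]
    (G : Subgroup (Equiv.Perm V)) (X : Set (Finset V))
    (hdown : ∀ s ∈ X, ∀ t ⊆ s, t ∈ X)
    (hinv : ∀ g ∈ G, ∀ s ∈ X, s.image g ∈ X)
    (hgood : IsGoodAction G X) :
    IsPureAction G X :=
  good_action_is_pure_general G X hdown hgood
end

section
/- Let X be a simplicial complex all of whose maximal faces are d-dimensional, let A be a (d−i)-face whose link in X is the standard (i−1)-sphere ∂B̄ for some set B with B ∉ X. Then the complex X̂ = (X \ (Ā ∗ ∂B̄)) ∪ (∂Ā ∗ B̄) obtained by the bistellar i-move has geometric carrier homeomorphic to that of X. -/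
open scoped Classical

/-- The geometric carrier of an abstract simplicial complex with vertex set `V`, in the
standard realization sending the vertex `v` to the basis point `e_v` of `V → ℝ`. -/
def carrier {V : Type*} [DecidableEq V] (Y : Set (Finset V)) : Set (V → ℝ) :=
  ⋃ s ∈ Y, convexHull ℝ ((s.image fun v => (Pi.single v 1 : V → ℝ)) : Set (V → ℝ))

/-!
The homeomorphism is an explicit piecewise-linear map of the standard simplex in `ℝ^V`: from a
point `x`, subtract `m = min_{a ∈ A} x a` from every `A`-coordinate and add `m · #A / #B` to every
`B`-coordinate. If `m > 0`, the support of `x` contains `A`, hence lies in `Ā ∗ ∂B̄`, and the image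
lies in the face `(A ∪ B) \ {a}` of `∂Ā ∗ B̄`, where `a` attains the minimum; if `m = 0`, `x` is
fixed. Since `B ∉ X`, every point of `|X|` has a vanishing `B`-coordinate, and every point of the
new carrier a vanishing `A`-coordinate, so the same map with `A` and `B` exchanged is the inverse.
-/

open Finset

lemma Finset.inf'_eq_zero_of_not_subset {ι : Type*} {A s : Finset ι} (hA : A.Nonempty)
    {f : ι → ℝ} (hf : ∀ i, 0 ≤ f i) (hfs : ∀ i ∉ s, f i = 0) (hAs : ¬ A ⊆ s) :
    A.inf' hA f = 0 := by
  obtain ⟨a, ha, has⟩ := not_subset.1 hAs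
  exact le_antisymm ((inf'_le f ha).trans_eq (hfs a has)) (le_inf' hA f fun i _ => hf i)

section Carrier

variable {V : Type*} [DecidableEq V] [Fintype V]

lemma mem_convexHull_image_single_iff (s : Finset V) (x : V → ℝ) :
    x ∈ convexHull ℝ ((fun v => (Pi.single v 1 : V → ℝ)) '' s) ↔
      x ∈ stdSimplex ℝ V ∧ ∀ v ∉ s, x v = 0 := by
  constructor
  · refine fun hx => convexHull_min (t := stdSimplex ℝ V ∩ {y | ∀ v ∉ s, y v = 0}) ?_
      ((convex_stdSimplex ℝ V).inter ?_) hx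
    · simp only [Set.image_subset_iff]
      intro v hv
      refine ⟨single_mem_stdSimplex ℝ v, fun u hu => ?_⟩
      exact Pi.single_eq_of_ne (by rintro rfl; exact hu hv) 1
    · intro y hy z hz a b _ _ _ v hv
      simp [hy v hv, hz v hv]
  · rintro ⟨⟨hx0, hx1⟩, hxs⟩
    have hsum : ∑ v ∈ s, x v = 1 := by
      rw [← hx1]
      exact sum_subset (subset_univ s) fun v _ hv => hxs v hv
    have hx : s.centerMass x (fun v => (Pi.single v 1 : V → ℝ)) = x := by
      rw [centerMass_eq_of_sum_1 _ _ hsum]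
      funext u
      by_cases hu : u ∈ s <;> simp [Pi.single_apply, hu, hxs]
    rw [← hx]
    exact centerMass_mem_convexHull s (fun v _ => hx0 v) (by rw [hsum]; exact one_pos)
      fun v hv => Set.mem_image_of_mem _ hv

lemma mem_carrier_iff {Y : Set (Finset V)} {x : V → ℝ} :
    x ∈ carrier Y ↔ x ∈ stdSimplex ℝ V ∧ ∃ s ∈ Y, ∀ v ∉ s, x v = 0 := by
  simp only [carrier, Set.mem_iUnion₂, exists_prop, coe_image, mem_convexHull_image_single_iff]
  constructor
  · rintro ⟨s, hs, hx, hxs⟩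
    exact ⟨hx, s, hs, hxs⟩
  · rintro ⟨hx, s, hs, hxs⟩
    exact ⟨s, hs, hx, hxs⟩

end Carrier

section PushMass

variable {V : Type*} [DecidableEq V]

noncomputable def pushMass (A B : Finset V) (hA : A.Nonempty) (x : V → ℝ) : V → ℝ :=
  fun v => x v + A.inf' hA x * if v ∈ A then -1 else if v ∈ B then (#A / #B : ℝ) else 0

variable {A B : Finset V} (hA : A.Nonempty) {x : V → ℝ} {v : V}

lemma pushMass_apply_of_mem_left (hv : v ∈ A) : pushMass A B hA x v = x v - A.inf' hA x := by
  simp [pushMass, hv, sub_eq_add_neg]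

lemma pushMass_apply_of_mem_right (hAB : Disjoint A B) (hv : v ∈ B) :
    pushMass A B hA x v = x v + A.inf' hA x * (#A / #B) := by
  simp [pushMass, hv, disjoint_right.1 hAB hv]

lemma pushMass_apply_of_notMem (hvA : v ∉ A) (hvB : v ∉ B) : pushMass A B hA x v = x v := by
  simp [pushMass, hvA, hvB]

lemma pushMass_of_inf'_eq_zero (h : A.inf' hA x = 0) : pushMass A B hA x = x := by
  funext v
  simp [pushMass, h]

lemma continuous_pushMass : Continuous (pushMass A B hA) := by
  have hinf : Continuous fun x : V → ℝ => A.inf' hA x :=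
    Continuous.finset_inf'_apply hA fun a _ => continuous_apply a
  exact continuous_pi fun v => (continuous_apply v).add (hinf.mul continuous_const)

lemma inf'_pushMass_right (hB : B.Nonempty) (hAB : Disjoint A B) :
    B.inf' hB (pushMass A B hA x) = B.inf' hB x + A.inf' hA x * (#A / #B) := by
  rw [inf'_congr hB rfl fun b hb => pushMass_apply_of_mem_right hA hAB hb]
  exact (apply_inf'_eq_inf'_comp hB (· + _) fun a b => (min_add_add_right a b _).symm).symm

lemma pushMass_pushMass (hB : B.Nonempty) (hAB : Disjoint A B) (hx : B.inf' hB x = 0) :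
    pushMass B A hB (pushMass A B hA x) = x := by
  have hcard : (#A : ℝ) ≠ 0 := by exact_mod_cast hA.card_pos.ne'
  have hcard' : (#B : ℝ) ≠ 0 := by exact_mod_cast hB.card_pos.ne'
  funext v
  by_cases hvA : v ∈ A
  · rw [pushMass_apply_of_mem_right hB hAB.symm hvA, pushMass_apply_of_mem_left hA hvA,
      inf'_pushMass_right hA hB hAB, hx, zero_add]
    field_simp
    ring
  by_cases hvB : v ∈ B
  · rw [pushMass_apply_of_mem_left hB hvB, pushMass_apply_of_mem_right hA hAB hvB,
      inf'_pushMass_right hA hB hAB, hx, zero_add]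
    ring
  · rw [pushMass_apply_of_notMem hB hvB hvA, pushMass_apply_of_notMem hA hvA hvB]

variable [Fintype V]

lemma sum_pushMass (hB : B.Nonempty) (hAB : Disjoint A B) :
    ∑ v, pushMass A B hA x v = ∑ v, x v := by
  have hcard : (#B : ℝ) ≠ 0 := by exact_mod_cast hB.card_pos.ne'
  have hdir : ∑ v : V, (if v ∈ A then -1 else if v ∈ B then (#A / #B : ℝ) else 0) = 0 := by
    rw [← sum_subset (subset_univ (A ∪ B)) fun v _ hv => by simp_all, sum_union hAB,
      sum_ite_of_true (s := A) fun v hv => hv,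
      sum_ite_of_false (s := B) fun v hv => disjoint_right.1 hAB hv,
      sum_ite_of_true (s := B) fun v hv => hv]
    simp [field]
  simp only [pushMass, sum_add_distrib, ← mul_sum, hdir, mul_zero, add_zero]

lemma pushMass_mem_stdSimplex (hB : B.Nonempty) (hAB : Disjoint A B) (hx : x ∈ stdSimplex ℝ V) :
    pushMass A B hA x ∈ stdSimplex ℝ V := by
  refine ⟨fun v => ?_, (sum_pushMass hA hB hAB).trans hx.2⟩
  have hm : 0 ≤ A.inf' hA x := le_inf' hA x fun a _ => hx.1 a
  by_cases hvA : v ∈ A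
  · rw [pushMass_apply_of_mem_left hA hvA, sub_nonneg]
    exact inf'_le x hvA
  by_cases hvB : v ∈ B
  · rw [pushMass_apply_of_mem_right hA hAB hvB]
    exact add_nonneg (hx.1 v) (mul_nonneg hm (by positivity))
  · rw [pushMass_apply_of_notMem hA hvA hvB]
    exact hx.1 v

variable {Y Z : Set (Finset V)}

lemma inf'_eq_zero_of_mem_carrier (hYA : ∀ s ∈ Y, ¬ A ⊆ s) (hx : x ∈ carrier Y) :
    A.inf' hA x = 0 := by
  obtain ⟨hxΔ, s, hs, hxs⟩ := mem_carrier_iff.1 hx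
  exact inf'_eq_zero_of_not_subset hA hxΔ.1 hxs (hYA s hs)

lemma pushMass_mem_carrier (hB : B.Nonempty) (hAB : Disjoint A B)
    (hY : ∀ s ∈ Y, A ⊆ s → s ⊆ A ∪ B) (hYZ : ∀ s ∈ Y, ¬ s ⊆ A ∪ B → s ∈ Z)
    (hZ : ∀ a ∈ A, (A ∪ B).erase a ∈ Z) (hx : x ∈ carrier Y) :
    pushMass A B hA x ∈ carrier Z := by
  obtain ⟨hxΔ, s, hs, hxs⟩ := mem_carrier_iff.1 hx
  refine mem_carrier_iff.2 ⟨pushMass_mem_stdSimplex hA hB hAB hxΔ, ?_⟩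
  by_cases hsAB : s ⊆ A ∪ B
  · obtain ⟨a, ha, hmin⟩ := exists_mem_eq_inf' hA x
    refine ⟨(A ∪ B).erase a, hZ a ha, fun v hv => ?_⟩
    obtain rfl | hva := eq_or_ne v a
    · rw [pushMass_apply_of_mem_left hA ha, hmin, sub_self]
    · have hvAB : v ∉ A ∪ B := by simpa [hva] using hv
      rw [pushMass_apply_of_notMem hA (fun h => hvAB (mem_union_left B h))
        (fun h => hvAB (mem_union_right A h)), hxs v fun h => hvAB (hsAB h)]
  · rw [pushMass_of_inf'_eq_zero hA (inf'_eq_zero_of_not_subset hA hxΔ.1 hxs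
      fun hAs => hsAB (hY s hs hAs))]
    exact ⟨s, hYZ s hs hsAB, hxs⟩

end PushMass

section Homeomorph

variable {V : Type*} [DecidableEq V] [Fintype V] {A B : Finset V} {Y Z : Set (Finset V)}

noncomputable def pushMassHomeomorph (hA : A.Nonempty) (hB : B.Nonempty) (hAB : Disjoint A B)
    (hYB : ∀ s ∈ Y, ¬ B ⊆ s) (hZA : ∀ s ∈ Z, ¬ A ⊆ s)
    (hY : ∀ s ∈ Y, A ⊆ s → s ⊆ A ∪ B) (hZ : ∀ s ∈ Z, B ⊆ s → s ⊆ A ∪ B)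
    (hYZ : ∀ s ∈ Y, ¬ s ⊆ A ∪ B → s ∈ Z) (hZY : ∀ s ∈ Z, ¬ s ⊆ A ∪ B → s ∈ Y)
    (hAZ : ∀ a ∈ A, (A ∪ B).erase a ∈ Z) (hBY : ∀ b ∈ B, (A ∪ B).erase b ∈ Y) :
    carrier Y ≃ₜ carrier Z where
  toFun x := ⟨pushMass A B hA x, pushMass_mem_carrier hA hB hAB hY hYZ hAZ x.2⟩
  invFun x := ⟨pushMass B A hB x, pushMass_mem_carrier hB hA hAB.symm
    (by simpa only [union_comm] using hZ) (by simpa only [union_comm] using hZY)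
    (by simpa only [union_comm] using hBY) x.2⟩
  left_inv x := Subtype.ext <| pushMass_pushMass hA hB hAB (inf'_eq_zero_of_mem_carrier hB hYB x.2)
  right_inv x := Subtype.ext <|
    pushMass_pushMass hB hA hAB.symm (inf'_eq_zero_of_mem_carrier hA hZA x.2)
  continuous_toFun := ((continuous_pushMass hA).comp continuous_subtype_val).subtype_mk _
  continuous_invFun := ((continuous_pushMass hB).comp continuous_subtype_val).subtype_mk _

end Homeomorph

section BistellarMove

variable {V : Type*} [DecidableEq V] {X : Set (Finset V)} {A B s : Finset V}

def link (X : Set (Finset V)) (A : Finset V) : Set (Finset V) :=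
  {τ | τ ∩ A = ∅ ∧ τ ∪ A ∈ X}

def bistellarMove (X : Set (Finset V)) (A B : Finset V) : Set (Finset V) :=
  (X \ {s | ∃ a b, a ⊆ A ∧ b ⊂ B ∧ s = a ∪ b}) ∪ {s | ∃ a b, a ⊂ A ∧ b ⊆ B ∧ s = a ∪ b}

lemma subset_union_of_link_eq (hlink : link X A = {τ | τ ⊂ B}) (hs : s ∈ X) (hAs : A ⊆ s) :
    s ⊆ A ∪ B := by
  have hlk : s \ A ∈ link X A := ⟨sdiff_inter_self A s, by rwa [sdiff_union_of_subset hAs]⟩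
  rw [hlink] at hlk
  calc s = A ∪ s \ A := (union_sdiff_of_subset hAs).symm
    _ ⊆ A ∪ B := union_subset_union subset_rfl hlk.subset

lemma union_mem_of_link_eq (hlink : link X A = {τ | τ ⊂ B}) {τ : Finset V} (hτ : τ ⊂ B) :
    τ ∪ A ∈ X := by
  have hlk : τ ∈ link X A := hlink ▸ hτ
  exact hlk.2

lemma erase_mem_of_link_eq (hdown : ∀ s ∈ X, ∀ t ⊆ s, t ∈ X) (hlink : link X A = {τ | τ ⊂ B})
    {b : V} (hb : b ∈ B) : (A ∪ B).erase b ∈ X :=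
  hdown _ (union_mem_of_link_eq hlink (erase_ssubset hb)) _ fun v => by simp only [mem_erase, mem_union]; tauto

lemma disjoint_of_link_eq (hdown : ∀ s ∈ X, ∀ t ⊆ s, t ∈ X) (hB : B ∉ X)
    (hlink : link X A = {τ | τ ⊂ B}) : Disjoint A B := by
  refine disjoint_left.2 fun v hvA hvB => hB ?_
  exact hdown _ (union_mem_of_link_eq hlink (erase_ssubset hvB)) B fun w hw => by
    obtain rfl | hwv := eq_or_ne w v
    · exact mem_union_right _ hvA
    · exact mem_union_left _ (mem_erase.2 ⟨hwv, hw⟩)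

lemma not_subset_of_mem_bistellarMove (hdown : ∀ s ∈ X, ∀ t ⊆ s, t ∈ X) (hB : B ∉ X)
    (hlink : link X A = {τ | τ ⊂ B}) (hAB : Disjoint A B) (hs : s ∈ bistellarMove X A B) :
    ¬ A ⊆ s := by
  intro hAs
  rcases hs with ⟨hsX, hsRem⟩ | ⟨a, b, ha, hb, rfl⟩
  · refine hsRem ⟨s ∩ A, s ∩ B, inter_subset_right,
      ⟨inter_subset_right, fun hBs => hB (hdown s hsX B (hBs.trans inter_subset_left))⟩, ?_⟩
    rw [← inter_union_distrib_left, inter_eq_left.2 (subset_union_of_link_eq hlink hsX hAs)]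
  · exact ha.2 fun v hv =>
      (mem_union.1 (hAs hv)).resolve_right fun hvb => disjoint_left.1 hAB hv (hb hvb)

lemma subset_union_of_mem_bistellarMove (hdown : ∀ s ∈ X, ∀ t ⊆ s, t ∈ X) (hB : B ∉ X)
    (hs : s ∈ bistellarMove X A B) (hBs : B ⊆ s) : s ⊆ A ∪ B := by
  rcases hs with ⟨hsX, -⟩ | ⟨a, b, ha, hb, rfl⟩
  · exact absurd (hdown s hsX B hBs) hB
  · exact union_subset_union ha.subset hb

lemma mem_bistellarMove_of_not_subset (hs : s ∈ X) (hsAB : ¬ s ⊆ A ∪ B) :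
    s ∈ bistellarMove X A B :=
  Or.inl ⟨hs, by rintro ⟨a, b, ha, hb, rfl⟩; exact hsAB (union_subset_union ha hb.subset)⟩

lemma mem_of_mem_bistellarMove_of_not_subset (hs : s ∈ bistellarMove X A B)
    (hsAB : ¬ s ⊆ A ∪ B) : s ∈ X := by
  rcases hs with ⟨hsX, -⟩ | ⟨a, b, ha, hb, rfl⟩
  · exact hsX
  · exact absurd (union_subset_union ha.subset hb) hsAB

lemma erase_mem_bistellarMove (hAB : Disjoint A B) {a : V} (ha : a ∈ A) :
    (A ∪ B).erase a ∈ bistellarMove X A B := by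
  refine Or.inr ⟨A.erase a, B, erase_ssubset ha, subset_rfl, ?_⟩
  rw [erase_union_distrib, erase_eq_of_notMem (disjoint_left.1 hAB ha)]

end BistellarMove

theorem bistellar_move_homeomorph_general {V : Type*} [Fintype V] [DecidableEq V]
    (d i : ℕ) (X : Set (Finset V))
    (hdown : ∀ s ∈ X, ∀ t ⊆ s, t ∈ X)
    (A B : Finset V)
    (hAcard : A.card = d - i + 1) (hBcard : B.card = i + 1) (hB : B ∉ X)
    (hlink : {τ : Finset V | τ ∩ A = ∅ ∧ τ ∪ A ∈ X} = {τ : Finset V | τ ⊂ B}) :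
    Nonempty
      ((carrier X : Set (V → ℝ)) ≃ₜ
        (carrier ((X \ {s | ∃ a b, a ⊆ A ∧ b ⊂ B ∧ s = a ∪ b}) ∪
          {s | ∃ a b, a ⊂ A ∧ b ⊆ B ∧ s = a ∪ b}) : Set (V → ℝ))) := by
  have hAne : A.Nonempty := card_pos.1 (by omega)
  have hBne : B.Nonempty := card_pos.1 (by omega)
  have hAB : Disjoint A B := disjoint_of_link_eq hdown hB hlink
  exact ⟨pushMassHomeomorph (Z := bistellarMove X A B) hAne hBne hAB
    (fun s hs hBs => hB (hdown s hs B hBs))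
    (fun _ hs => not_subset_of_mem_bistellarMove hdown hB hlink hAB hs)
    (fun _ hs => subset_union_of_link_eq hlink hs)
    (fun _ hs => subset_union_of_mem_bistellarMove hdown hB hs)
    (fun _ hs => mem_bistellarMove_of_not_subset hs)
    (fun _ hs => mem_of_mem_bistellarMove_of_not_subset hs)
    (fun _ ha => erase_mem_bistellarMove hAB ha)
    (fun _ hb => erase_mem_of_link_eq hdown hlink hb)⟩

/-- Bistellar moves preserve the topological type: let `X` be a simplicial complex all of whose
maximal faces are `d`-dimensional, `A` a `(d−i)`-face whose link is the boundary `∂B̄` of a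
simplex on an `(i+1)`-set `B` with `B ∉ X`.  Then the complex
`X̂ = (X \ (Ā ∗ ∂B̄)) ∪ (∂Ā ∗ B̄)` obtained by the bistellar `i`-move has geometric carrier
homeomorphic to that of `X`. -/
theorem bistellar_move_homeomorph {V : Type*} [Fintype V] [DecidableEq V]
    (d i : ℕ) (hi : i ≤ d) (X : Set (Finset V))
    (hdown : ∀ s ∈ X, ∀ t ⊆ s, t ∈ X)
    (hpure : ∀ s ∈ X, ∃ t ∈ X, s ⊆ t ∧ t.card = d + 1)
    (A B : Finset V) (hA : A ∈ X)
    (hAcard : A.card = d - i + 1) (hBcard : B.card = i + 1) (hB : B ∉ X)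
    (hlink : {τ : Finset V | τ ∩ A = ∅ ∧ τ ∪ A ∈ X} = {τ : Finset V | τ ⊂ B}) :
    Nonempty
      ((carrier X : Set (V → ℝ)) ≃ₜ
        (carrier ((X \ {s | ∃ a b, a ⊆ A ∧ b ⊂ B ∧ s = a ∪ b}) ∪
          {s | ∃ a b, a ⊂ A ∧ b ⊆ B ∧ s = a ∪ b}) : Set (V → ℝ))) :=
  bistellar_move_homeomorph_general d i X hdown A B hAcard hBcard hB hlink
end
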